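/- arXiv:2201.10815 — 12 statements merged into one kernel-verified Lean document; each statement's English description precedes it below -/
import Mathlib

section
/- For every lattice L of finite length, the number of join-irreducible elements of L is at least the length of L, i.e. j(L) ≥ δ(L). -/
/-- The length of a lattice of finite length: the supremum of the lengths of
chains (`LTSeries`) in `L`. -/
noncomputable def latticeLength (L : Type*) [Preorder L] : ℕ :=
  sSup {n : ℕ | ∃ c : LTSeries L, c.length = n}

lemma wf_of_bounded_chains {L : Type*} [Preorder L]
    (hFL : ∃ N : ℕ, ∀ c : LTSeries L, c.length ≤ N) :
    WellFounded ((· < ·) : L → L → Prop) := by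
  obtain ⟨N, hN⟩ := hFL
  rw [RelEmbedding.wellFounded_iff_isEmpty]
  constructor
  intro f
  have key : ∀ a b : ℕ, b < a → f a < f b := fun a b h => f.map_rel_iff.2 h
  set c : LTSeries L := ⟨N + 1, fun i => f (N + 1 - i.1), fun i => by
    apply key
    have := i.2
    simp only [Fin.val_succ, Fin.coe_castSucc]
    omega⟩ with hc
  have := hN c
  simp [hc] at this

lemma exists_supIrred_le {L : Type*} [Lattice L] [OrderBot L]
    (wf : WellFounded ((· < ·) : L → L → Prop)) {a b : L} (h : ¬ b ≤ a) :
    ∃ p : L, SupIrred p ∧ p ≤ b ∧ ¬ p ≤ a := by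
  obtain ⟨m, hm, hmin⟩ := wf.has_min {p : L | p ≤ b ∧ ¬ p ≤ a} ⟨b, le_refl b, h⟩
  refine ⟨m, ⟨?_, ?_⟩, hm.1, hm.2⟩
  · intro hmmin
    exact hm.2 (le_trans (hmmin bot_le) (bot_le))
  · intro x y hxy
    by_contra hcon
    push_neg at hcon
    have hx : x ≤ m := hxy ▸ le_sup_left
    have hy : y ≤ m := hxy ▸ le_sup_right
    have hxa : x ≤ a := by
      by_contra hxa
      exact hmin x ⟨le_trans hx hm.1, hxa⟩ (lt_of_le_of_ne hx hcon.1)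
    have hya : y ≤ a := by
      by_contra hya
      exact hmin y ⟨le_trans hy hm.1, hya⟩ (lt_of_le_of_ne hy hcon.2)
    exact hm.2 (hxy ▸ sup_le hxa hya)

/-- In every lattice of finite length, the number of join-irreducible elements is
at least the length of the lattice: `j(L) ≥ δ(L)`. -/
theorem joinIrreducibles_card_ge_length {L : Type*} [Lattice L] [BoundedOrder L]
    (hFL : ∃ N : ℕ, ∀ c : LTSeries L, c.length ≤ N) :
    (latticeLength L : Cardinal) ≤ Cardinal.mk {p : L // SupIrred p} := by
  have wf := wf_of_bounded_chains hFL
  obtain ⟨N, hN⟩ := hFL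
  have hne : {n : ℕ | ∃ c : LTSeries L, c.length = n}.Nonempty :=
    ⟨0, RelSeries.singleton _ (⊥ : L), rfl⟩
  have hbdd : BddAbove {n : ℕ | ∃ c : LTSeries L, c.length = n} :=
    ⟨N, fun n ⟨c, hc⟩ => hc ▸ hN c⟩
  obtain ⟨c, hc⟩ := Nat.sSup_mem hne hbdd
  set n := latticeLength L with hn
  -- for each i : Fin n, choose a sup-irreducible
  have step : ∀ i : Fin n, ∃ p : L, SupIrred p ∧ p ≤ c (Fin.succ (Fin.cast hc.symm i))
      ∧ ¬ p ≤ c (Fin.castSucc (Fin.cast hc.symm i)) := by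
    intro i
    apply exists_supIrred_le wf
    exact not_le_of_gt (c.step _)
  choose p hirr hle hnle using step
  have hinj : Function.Injective (fun i : Fin n => (⟨p i, hirr i⟩ : {p : L // SupIrred p})) := by
    intro i j hij
    simp only [Subtype.mk.injEq] at hij
    by_contra hne'
    rcases lt_or_gt_of_ne (fun h : i = j => hne' h) with hlt | hlt
    · -- i < j : p i ≤ c (i+1) ≤ c j (castSucc), but p j not ≤ c j castSucc
      apply hnle j
      rw [← hij]
      refine le_trans (hle i) (c.monotone ?_)
      apply Fin.le_def.2
      rw [Fin.lt_def] at hlt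
      simp only [Fin.val_succ, Fin.coe_castSucc, Fin.val_cast]
      change (i : ℕ) + 1 ≤ (j : ℕ)
      omega
    · apply hnle i
      rw [hij]
      refine le_trans (hle j) (c.monotone ?_)
      apply Fin.le_def.2
      rw [Fin.lt_def] at hlt
      simp only [Fin.val_succ, Fin.coe_castSucc, Fin.val_cast]
      change (j : ℕ) + 1 ≤ (i : ℕ)
      omega
  have hinj' : Function.Injective
      (fun i : ULift.{_, 0} (Fin n) => (⟨p i.down, hirr i.down⟩ : {p : L // SupIrred p})) := by
    intro i j hij
    exact ULift.ext _ _ (hinj hij)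
  calc (n : Cardinal) = Cardinal.mk (ULift.{_, 0} (Fin n)) := by simp
    _ ≤ Cardinal.mk {p : L // SupIrred p} := Cardinal.mk_le_of_injective hinj'
end

section
/- Let L be a modular lattice of finite length, let x ∈ L and let p, q be join-irreducible elements of L such that p ≤ x ∨ q but p ≰ x ∨ q_*. Then x ∨ p = x ∨ q. -/
/-- A lattice with bounded chain lengths is well-founded for `>`. -/
lemma wellFoundedGT_of_bounded_ltSeries {L : Type*} [Lattice L]
    (hFL : ∃ N : ℕ, ∀ c : LTSeries L, c.length ≤ N) : WellFoundedGT L := by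
  obtain ⟨N, hN⟩ := hFL
  constructor
  rw [RelEmbedding.wellFounded_iff_isEmpty]
  constructor
  intro g
  -- `g : ((· > ·) : ℕ → ℕ → Prop) ↪r ((· > ·) : L → L → Prop)`, i.e. `g` is strictly monotone
  have hmono : ∀ {m n : ℕ}, m < n → g m < g n := fun h => g.map_rel_iff.2 h
  have : (⟨N + 1, fun i => g i, fun i => hmono (by simp [Fin.castSucc_lt_succ_iff])⟩ :
      LTSeries L).length ≤ N := hN _
  simp at this

/-- In a modular lattice of finite length, if `p, q` are join-irreducible,
`q_*` is the unique lower cover of `q`, `p ≤ x ⊔ q` and `p ≰ x ⊔ q_*`,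
then `x ⊔ p = x ⊔ q`. -/
theorem sup_eq_of_le_sup_of_not_le_sup_lowerCover
    {L : Type*} [Lattice L] [BoundedOrder L] [IsModularLattice L]
    (hFL : ∃ N : ℕ, ∀ c : LTSeries L, c.length ≤ N)
    (x p q qstar : L) (hp : SupIrred p) (hq : SupIrred q)
    (hqs : qstar ⋖ q) (hqsu : ∀ y : L, y ⋖ q → y = qstar)
    (h1 : p ≤ x ⊔ q) (h2 : ¬ p ≤ x ⊔ qstar) :
    x ⊔ p = x ⊔ q := by
  have hwf : WellFoundedGT L := wellFoundedGT_of_bounded_ltSeries hFL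
  -- every element strictly below q is below qstar
  have hbelow : ∀ y : L, y < q → y ≤ qstar := by
    intro y hy
    obtain ⟨z, hyz, hzq⟩ := exists_le_covBy_of_lt hy
    exact hyz.trans (hqsu z hzq).le
  refine le_antisymm (sup_le le_sup_left h1) ?_
  suffices hq' : q ≤ x ⊔ p from sup_le le_sup_left hq'
  by_contra hq'
  have hlt : q ⊓ (x ⊔ p) < q := inf_le_left.lt_of_ne (by
    intro h; exact hq' (h ▸ inf_le_right))
  have hle : q ⊓ (x ⊔ p) ≤ qstar := hbelow _ hlt
  have : p ≤ x ⊔ qstar := by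
    have hp' : p ≤ (x ⊔ q) ⊓ (x ⊔ p) := le_inf h1 le_sup_right
    rw [sup_inf_assoc_of_le q (le_sup_left : x ≤ x ⊔ p)] at hp'
    exact hp'.trans (sup_le_sup_left hle x)
  exact h2 this
end

section
/- Let L be a semimodular lattice of finite length whose greatest element 1 is a join of atoms. Then L is co-atomistic (every element is a meet of co-atoms) and L is complemented. -/
/-- Let `L` be a semimodular lattice of finite length whose greatest element is a
join of atoms. Then `L` is co-atomistic and complemented. -/
theorem semimodular_coatomistic_complemented
    {L : Type*} [Lattice L] [BoundedOrder L]
    (hFL : ∃ N : ℕ, ∀ c : LTSeries L, c.length ≤ N)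
    (hsemi : ∀ a b c d : L, a ⋖ b → a = b ⊓ c → d = b ⊔ c → c ⋖ d)
    (htop : ∃ S : Finset L, (∀ a ∈ S, IsAtom a) ∧ (⊤ : L) = S.sup id) :
    (∀ x : L, ∃ S : Finset L, (∀ a ∈ S, IsCoatom a) ∧ x = S.inf id) ∧
      ComplementedLattice L := by
  classical
  obtain ⟨N, hN⟩ := hFL
  -- well-foundedness of `>` : no infinite strictly increasing sequences
  have hwf : WellFounded ((· > ·) : L → L → Prop) := by
    rw [RelEmbedding.wellFounded_iff_isEmpty]
    constructor
    intro g
    have hmono : ∀ m n : ℕ, m < n → g m < g n := by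
      intro m n h
      exact g.map_rel_iff.mpr h
    let series : LTSeries L :=
      ⟨N + 1, fun i => g i, by
        intro i
        exact hmono _ _ (by simp)⟩
    have := hN series
    simp only [series] at this
    omega
  -- maximal elements exist
  have hmax : ∀ s : Set L, s.Nonempty → ∃ m ∈ s, ∀ y ∈ s, ¬ m < y := by
    intro s hs
    obtain ⟨m, hm, hmin⟩ := hwf.has_min s hs
    exact ⟨m, hm, fun y hy h => hmin y hy h⟩
  -- every non-top element misses some atom
  have hatom : ∀ x : L, x ≠ ⊤ → ∃ a : L, IsAtom a ∧ ¬ a ≤ x := by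
    intro x hx
    obtain ⟨S, hS, hSt⟩ := htop
    by_contra h
    push_neg at h
    have : (⊤ : L) ≤ x := by
      rw [hSt]
      exact Finset.sup_le fun a ha => h a (hS a ha)
    exact hx (le_antisymm le_top this)
  -- covering lemma from semimodularity
  have hcov : ∀ a c : L, IsAtom a → ¬ a ≤ c → c ⋖ c ⊔ a := by
    intro a c ha hac
    have h1 : a ⊓ c = ⊥ := by
      rcases lt_or_eq_of_le (inf_le_left : a ⊓ c ≤ a) with h | h
      · exact ha.2 _ h
      · exact absurd (h ▸ inf_le_right) hac
    exact hsemi ⊥ a c (c ⊔ a) ha.bot_covBy h1.symm (sup_comm c a)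
  -- complements exist
  have hcompl : ∀ x : L, ∃ c : L, x ⊓ c = ⊥ ∧ x ⊔ c = ⊤ := by
    intro x
    obtain ⟨c, hc, hcmax⟩ := hmax {c | x ⊓ c = ⊥} ⟨⊥, by simp⟩
    refine ⟨c, hc, ?_⟩
    by_contra htop'
    obtain ⟨a, ha, hax⟩ := hatom (x ⊔ c) htop'
    have hac : ¬ a ≤ c := fun h => hax (h.trans le_sup_right)
    have hcover : c ⋖ c ⊔ a := hcov a c ha hac
    have hmeet : x ⊓ (c ⊔ a) = ⊥ := by
      by_contra hm
      set m := x ⊓ (c ⊔ a) with hmdef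
      have hmc : ¬ m ≤ c := by
        intro h
        exact hm (le_antisymm ((le_inf inf_le_left h).trans hc.le) bot_le)
      have h1 : c < c ⊔ m := lt_of_le_of_ne le_sup_left
        (fun h => hmc (h ▸ le_sup_right))
      have h2 : c ⊔ m ≤ c ⊔ a := sup_le le_sup_left inf_le_right
      rcases hcover.eq_or_eq le_sup_left h2 with h3 | h3
      · exact h1.ne' h3
      · have ha1 : a ≤ c ⊔ m := h3 ▸ le_sup_right
        exact hax (ha1.trans (sup_le le_sup_right (inf_le_left.trans le_sup_left)))
    exact hcmax (c ⊔ a) hmeet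
      (lt_of_le_of_ne le_sup_left (fun h => hac (h ▸ le_sup_right)))
  -- coatom separation lemma
  have hcoatom : ∀ x a : L, IsAtom a → ¬ a ≤ x →
      ∃ c : L, IsCoatom c ∧ x ≤ c ∧ ¬ a ≤ c := by
    intro x a ha hax
    obtain ⟨c, ⟨hxc, hac⟩, hcmax⟩ := hmax {z | x ≤ z ∧ ¬ a ≤ z} ⟨x, le_refl x, hax⟩
    -- every element strictly above c contains a, hence contains c ⊔ a
    have hup : ∀ z : L, c < z → c ⊔ a ≤ z := by
      intro z hz
      have haz : a ≤ z := by
        by_contra h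
        exact hcmax z ⟨hxc.trans hz.le, h⟩ hz
      exact sup_le hz.le haz
    -- c ⊔ a = ⊤
    have htopca : c ⊔ a = ⊤ := by
      by_contra h
      obtain ⟨b, hb, hbca⟩ := hatom (c ⊔ a) h
      have hbc : ¬ b ≤ c := fun h' => hbca (h'.trans le_sup_left)
      have hcoverb : c ⋖ c ⊔ b := hcov b c hb hbc
      have h1 : c < c ⊔ b := lt_of_le_of_ne le_sup_left
        (fun h' => hbc (h' ▸ le_sup_right))
      have h2 : c ⊔ a ≤ c ⊔ b := hup (c ⊔ b) h1
      have h3 : c < c ⊔ a := lt_of_le_of_ne le_sup_left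
        (fun h' => hac (h' ▸ le_sup_right))
      rcases hcoverb.eq_or_eq h3.le h2 with h4 | h4
      · exact h3.ne' h4
      · exact hbca (h4 ▸ le_sup_right)
    refine ⟨c, ⟨fun h => hac (h.symm ▸ (le_top : a ≤ ⊤)), fun z hz => ?_⟩, hxc, hac⟩
    exact top_le_iff.mp (htopca ▸ hup z hz)
  -- main part: co-atomistic, by well-founded induction upward
  have hcoat : ∀ x : L, ∃ S : Finset L, (∀ a ∈ S, IsCoatom a) ∧ x = S.inf id := by
    intro x
    induction x using hwf.induction with
    | _ x ih =>
      by_cases hx : x = ⊤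
      · exact ⟨∅, by simp, by simp [hx]⟩
      · obtain ⟨a, ha, hax⟩ := hatom x hx
        have hxlt : x < x ⊔ a := lt_of_le_of_ne le_sup_left
          (fun h => hax (h ▸ le_sup_right))
        obtain ⟨S, hS, hSy⟩ := ih (x ⊔ a) hxlt
        obtain ⟨c, hc, hxc, hac⟩ := hcoatom x a ha hax
        refine ⟨insert c S, ?_, ?_⟩
        · intro b hb
          rcases Finset.mem_insert.mp hb with h | h
          · exact h ▸ hc
          · exact hS b h
        · rw [Finset.inf_insert, ← hSy]
          have hcover : x ⋖ x ⊔ a := hcov a x ha hax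
          have h1 : x ≤ c ⊓ (x ⊔ a) := le_inf hxc le_sup_left
          rcases hcover.eq_or_eq h1 (inf_le_right) with h2 | h2
          · exact h2.symm
          · exact absurd (le_sup_right.trans (h2 ▸ inf_le_left)) hac
  refine ⟨hcoat, ⟨fun x => ?_⟩⟩
  obtain ⟨c, h1, h2⟩ := hcompl x
  exact ⟨c, IsCompl.of_eq h1 h2⟩
end

section
/- Let L be a lattice of finite length and let Q be a (possibly empty) set of coverings of L. Then the following are equivalent: (a) Q is closed under subtransposition, i.e. for every (a,b) ∈ Q and every interval [c,d] that is an upper or lower transpose of [a,b], every covering (c',d') with c ≤ c' and d' ≤ d lying inside [c,d] belongs to Q; (b) there is a lattice congruence θ of L such that Q = Cov(θ), the set of coverings (a,b) of L with a θ b. -/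
/-- A set `θ ⊆ L × L` is a lattice congruence if it is an equivalence relation
compatible with joins and meets. -/
def IsLatticeCon {L : Type*} [Lattice L] (θ : Set (L × L)) : Prop :=
  Equivalence (fun a b : L => (a, b) ∈ θ) ∧
    ∀ a b c d : L, (a, b) ∈ θ → (c, d) ∈ θ →
      (a ⊔ c, b ⊔ d) ∈ θ ∧ (a ⊓ c, b ⊓ d) ∈ θ

/-- `[c,d]` is the upper transpose of `[a,b]`, i.e. `[a,b] ↗ [c,d]`:
`a = b ⊓ c` and `d = b ⊔ c`. -/
def UpperTranspose {L : Type*} [Lattice L] (a b c d : L) : Prop :=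
  a = b ⊓ c ∧ d = b ⊔ c

section Aux

variable {L : Type*} [Lattice L]

/-- `Q` is closed under subtransposition. -/
def ClosedSubtr (Q : Set (L × L)) : Prop :=
  ∀ pq ∈ Q, ∀ c d : L,
    (UpperTranspose pq.1 pq.2 c d ∨ UpperTranspose c d pq.1 pq.2) →
    ∀ c' d' : L, c ≤ c' → c' ⋖ d' → d' ≤ d → (c', d') ∈ Q

/-- All coverings inside the interval `[x, y]` belong to `Q`. -/
def QFull (Q : Set (L × L)) (x y : L) : Prop :=
  ∀ c' d' : L, x ≤ c' → c' ⋖ d' → d' ≤ y → (c', d') ∈ Q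

lemma wfLT_of_bound (hFL : ∃ N : ℕ, ∀ c : LTSeries L, c.length ≤ N) :
    WellFoundedLT L := by
  obtain ⟨N, hN⟩ := hFL
  constructor
  rw [RelEmbedding.wellFounded_iff_isEmpty]
  constructor
  intro f
  have hanti : ∀ i j : ℕ, i < j → f j < f i := fun i j h => f.map_rel_iff.2 h
  have hstep : ∀ i : Fin (N + 1),
      f (N + 1 - (Fin.castSucc i : Fin (N + 2)).val) < f (N + 1 - (i.succ : Fin (N + 2)).val) := by
    intro i
    apply hanti
    have := i.isLt
    simp only [Fin.val_succ, Fin.coe_castSucc]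
    omega
  have := hN ⟨N + 1, fun i => f (N + 1 - i.val), hstep⟩
  simp at this

lemma wfGT_of_bound (hFL : ∃ N : ℕ, ∀ c : LTSeries L, c.length ≤ N) :
    WellFoundedGT L := by
  obtain ⟨N, hN⟩ := hFL
  constructor
  rw [RelEmbedding.wellFounded_iff_isEmpty]
  constructor
  intro f
  have hmono : ∀ i j : ℕ, i < j → f i < f j := fun i j h => f.map_rel_iff.2 h
  have hstep : ∀ i : Fin (N + 1),
      f ((Fin.castSucc i : Fin (N + 2)).val) < f ((i.succ : Fin (N + 2)).val) := by
    intro i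
    apply hmono
    simp
  have := hN ⟨N + 1, fun i => f i.val, hstep⟩
  simp at this

lemma exists_covBy_le [WellFoundedLT L] {x z : L} (h : x < z) :
    ∃ v : L, x ⋖ v ∧ v ≤ z := by
  obtain ⟨m, ⟨hxm, hmz⟩, hmin⟩ :=
    (IsWellFounded.wf (α := L) (r := (· < ·))).has_min {v | x < v ∧ v ≤ z} ⟨z, h, le_rfl⟩
  exact ⟨m, ⟨hxm, fun w hxw hwm => hmin w ⟨hxw, hwm.le.trans hmz⟩ hwm⟩, hmz⟩

lemma exists_le_covBy [WellFoundedGT L] {x z : L} (h : x < z) :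
    ∃ u : L, x ≤ u ∧ u ⋖ z := by
  obtain ⟨m, ⟨hxm, hmz⟩, hmax⟩ :=
    (IsWellFounded.wf (α := L) (r := (· > ·))).has_min {u | x ≤ u ∧ u < z} ⟨x, le_rfl, h⟩
  exact ⟨m, hxm, hmz, fun w hmw hwz => hmax w ⟨hxm.trans hmw.le, hwz⟩ hmw⟩

variable {Q : Set (L × L)}

/-- The key "up-step" lemma: if all coverings in `[x,y]` are in `Q`, `x ≤ c'`,
`c' ⋖ d'` and `d' ≤ y ⊔ c'`, then `(c', d') ∈ Q`. -/
lemma step_up [WellFoundedLT L] [WellFoundedGT L] (hcl : ClosedSubtr Q)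
    {x y c' d' : L} (hQf : QFull Q x y) (hxc : x ≤ c') (hcov : c' ⋖ d')
    (hxy : x ≤ y) (hd : d' ≤ y ⊔ c') : (c', d') ∈ Q := by
  suffices H : ∀ v : L, x ≤ v → v ≤ y → d' ≤ v ⊔ c' → (c', d') ∈ Q from H y hxy le_rfl hd
  intro v
  refine (IsWellFounded.wf (α := L) (r := (· < ·))).induction
    (C := fun v => x ≤ v → v ≤ y → d' ≤ v ⊔ c' → (c', d') ∈ Q) v ?_
  clear hd hxy v
  intro v IH hxv hvy hd
  have hvc : ¬ v ≤ c' := by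
    intro h
    exact absurd (hd.trans (sup_le h le_rfl)) hcov.lt.not_ge
  have hlt : v ⊓ c' < v :=
    lt_of_le_of_ne inf_le_left (fun h => hvc (h ▸ inf_le_right))
  obtain ⟨t, hti, htv⟩ := exists_le_covBy hlt
  by_cases hB : d' ≤ t ⊔ c'
  · exact IH t htv.lt ((le_inf hxv hxc).trans hti) (htv.le.trans hvy) hB
  · have htQ : (t, v) ∈ Q := hQf t v ((le_inf hxv hxc).trans hti) htv hvy
    have h1' : v ⊓ (t ⊔ c') = t := by
      rcases htv.wcovBy.eq_or_eq (le_inf htv.le le_sup_left) inf_le_left with h | h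
      · exact h
      · exfalso
        have hvtc : v ≤ t ⊔ c' := h ▸ inf_le_right
        exact hB (hd.trans (sup_le hvtc le_sup_right))
    have hvt : v ⊔ (t ⊔ c') = v ⊔ c' := by
      rw [← sup_assoc, sup_eq_left.mpr htv.le]
    have hut : UpperTranspose t v (t ⊔ c') (v ⊔ c') := ⟨h1'.symm, hvt.symm⟩
    have hQTC : ∀ u₁ v₁ : L, t ⊔ c' ≤ u₁ → u₁ ⋖ v₁ → v₁ ≤ v ⊔ c' → (u₁, v₁) ∈ Q :=
      fun u₁ v₁ ha hb hc => hcl (t, v) htQ (t ⊔ c') (v ⊔ c') (Or.inl hut) u₁ v₁ ha hb hc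
    obtain ⟨u₁, ⟨hu1, hu2, hu3⟩, hmax⟩ :=
      (IsWellFounded.wf (α := L) (r := (· > ·))).has_min
        {u | t ⊔ c' ≤ u ∧ u ≤ v ⊔ c' ∧ ¬ d' ≤ u}
        ⟨t ⊔ c', le_rfl, sup_le_sup_right htv.le _, hB⟩
    have hult : u₁ < v ⊔ c' := lt_of_le_of_ne hu2 (fun h => hu3 (h ▸ hd))
    obtain ⟨v₁, hcv1, hv1le⟩ := exists_covBy_le hult
    have hd'v1 : d' ≤ v₁ := by
      by_contra hcon
      exact hmax v₁ ⟨hu1.trans hcv1.le, hv1le, hcon⟩ hcv1.lt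
    have hv1 : v₁ = u₁ ⊔ d' := by
      rcases hcv1.wcovBy.eq_or_eq le_sup_left (sup_le hcv1.le hd'v1) with h | h
      · exact absurd (h ▸ le_sup_right : d' ≤ u₁) hu3
      · exact h.symm
    have hc'u : u₁ ⊓ d' = c' := by
      have hcu1 : c' ≤ u₁ := le_sup_right.trans hu1
      rcases hcov.wcovBy.eq_or_eq (le_inf hcu1 hcov.le) inf_le_right with h | h
      · exact h
      · exact absurd (h ▸ inf_le_left : d' ≤ u₁) hu3
    have hut2 : UpperTranspose c' d' u₁ v₁ := by
      constructor
      · rw [inf_comm] at hc'u; exact hc'u.symm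
      · rw [hv1, sup_comm]
    exact hcl (u₁, v₁) (hQTC u₁ v₁ hu1 hcv1 hv1le) c' d' (Or.inr hut2) c' d'
      le_rfl hcov le_rfl

/-- The dual "down-step" lemma. -/
lemma step_down [WellFoundedLT L] [WellFoundedGT L] (hcl : ClosedSubtr Q)
    {x y c' d' : L} (hQf : QFull Q x y) (hdy : d' ≤ y) (hcov : c' ⋖ d')
    (hxy : x ≤ y) (hc : x ⊓ d' ≤ c') : (c', d') ∈ Q := by
  suffices H : ∀ v : L, x ≤ v → v ≤ y → v ⊓ d' ≤ c' → (c', d') ∈ Q from H x le_rfl hxy hc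
  intro v
  refine (IsWellFounded.wf (α := L) (r := (· > ·))).induction
    (C := fun v => x ≤ v → v ≤ y → v ⊓ d' ≤ c' → (c', d') ∈ Q) v ?_
  clear hc hxy v
  intro v IH hxv hvy hc
  have hdv : ¬ d' ≤ v := by
    intro h
    exact absurd ((le_inf h le_rfl).trans hc) hcov.lt.not_ge
  have hlt : v < v ⊔ d' :=
    lt_of_le_of_ne le_sup_left (fun h => hdv (h ▸ le_sup_right))
  obtain ⟨t, hvt, hti⟩ := exists_covBy_le hlt
  by_cases hB : t ⊓ d' ≤ c'
  · exact IH t hvt.lt (hxv.trans hvt.le) (hti.trans (sup_le hvy hdy)) hB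
  · have htQ : (v, t) ∈ Q := hQf v t hxv hvt (hti.trans (sup_le hvy hdy))
    have h1' : v ⊔ (t ⊓ d') = t := by
      rcases hvt.wcovBy.eq_or_eq le_sup_left (sup_le hvt.le inf_le_left) with h | h
      · exfalso
        have hvtd : t ⊓ d' ≤ v := h ▸ le_sup_right
        exact hB ((le_inf hvtd inf_le_right).trans hc)
      · exact h
    have hvt2 : v ⊓ (t ⊓ d') = v ⊓ d' := by
      rw [← inf_assoc, inf_eq_left.mpr hvt.le]
    have hut : UpperTranspose (v ⊓ d') (t ⊓ d') v t := by
      constructor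
      · rw [inf_comm (t ⊓ d') v, hvt2]
      · rw [sup_comm (t ⊓ d') v, h1']
    have hQTC : ∀ u₁ v₁ : L, v ⊓ d' ≤ u₁ → u₁ ⋖ v₁ → v₁ ≤ t ⊓ d' → (u₁, v₁) ∈ Q :=
      fun u₁ v₁ ha hb hc => hcl (v, t) htQ (v ⊓ d') (t ⊓ d') (Or.inr hut) u₁ v₁ ha hb hc
    obtain ⟨u₁, ⟨hu1, hu2, hu3⟩, hmin⟩ :=
      (IsWellFounded.wf (α := L) (r := (· < ·))).has_min
        {u | u ≤ t ⊓ d' ∧ v ⊓ d' ≤ u ∧ ¬ u ≤ c'}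
        ⟨t ⊓ d', le_rfl, inf_le_inf_right _ hvt.le, hB⟩
    have hult : v ⊓ d' < u₁ := lt_of_le_of_ne hu2 (fun h => hu3 (h ▸ hc))
    obtain ⟨w, hwle, hcw⟩ := exists_le_covBy hult
    have hwc : w ≤ c' := by
      by_contra hcon
      exact hmin w ⟨hcw.le.trans hu1, hwle, hcon⟩ hcw.lt
    have hw : w = u₁ ⊓ c' := by
      rcases hcw.wcovBy.eq_or_eq (le_inf hcw.le hwc) inf_le_left with h | h
      · exact h.symm
      · exact absurd (h ▸ inf_le_right : u₁ ≤ c') hu3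
    have hd'u : u₁ ⊔ c' = d' := by
      have hu1d : u₁ ≤ d' := hu1.trans inf_le_right
      rcases hcov.wcovBy.eq_or_eq le_sup_right (sup_le hu1d hcov.le) with h | h
      · exact absurd (h ▸ le_sup_left : u₁ ≤ c') hu3
      · exact h
    have hut2 : UpperTranspose w u₁ c' d' := ⟨hw, hd'u.symm⟩
    exact hcl (w, u₁) (hQTC w u₁ hwle hcw hu1) c' d' (Or.inl hut2) c' d'
      le_rfl hcov le_rfl

lemma QFull.mono {x y x' y' : L} (h : QFull Q x y) (h1 : x ≤ x') (h2 : y' ≤ y) :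
    QFull Q x' y' :=
  fun c' d' hc hcov hd => h c' d' (h1.trans hc) hcov (hd.trans h2)

lemma QFull.refl (Q : Set (L × L)) (a : L) : QFull Q a a := by
  intro c' d' hc hcov hd
  exact absurd (hd.trans hc) hcov.lt.not_ge

/-- Gluing lemma for transitivity. -/
lemma QFull.glue [WellFoundedLT L] [WellFoundedGT L] (hcl : ClosedSubtr Q)
    {x y z : L} (hxy : x ≤ y) (hyz : y ≤ z)
    (h1 : QFull Q x y) (h2 : QFull Q y z) : QFull Q x z := by
  intro c' d' hxc hcov hdz
  have hm : (y ⊔ c') ⊓ d' = c' ∨ (y ⊔ c') ⊓ d' = d' :=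
    hcov.wcovBy.eq_or_eq (le_inf le_sup_right hcov.le) inf_le_right
  rcases hm with h | h
  · have hyd : y ⊓ d' ≤ c' := by
      rw [← h]
      exact le_inf (inf_le_left.trans le_sup_left) inf_le_right
    exact step_down hcl h2 hdz hcov hyz hyd
  · have hdy : d' ≤ y ⊔ c' := by
      rw [← h]; exact inf_le_left
    exact step_up hcl h1 hxc hcov hxy hdy

/-- Join-compatibility. -/
lemma QFull.sup' [WellFoundedLT L] [WellFoundedGT L] (hcl : ClosedSubtr Q)
    {x y : L} (w : L) (hxy : x ≤ y) (h : QFull Q x y) :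
    QFull Q (x ⊔ w) (y ⊔ w) := by
  intro c' d' hc hcov hd
  refine step_up hcl h (le_sup_left.trans hc) hcov hxy (hd.trans ?_)
  exact sup_le le_sup_left ((le_sup_right.trans hc).trans le_sup_right)

/-- Meet-compatibility. -/
lemma QFull.inf' [WellFoundedLT L] [WellFoundedGT L] (hcl : ClosedSubtr Q)
    {x y : L} (w : L) (hxy : x ≤ y) (h : QFull Q x y) :
    QFull Q (x ⊓ w) (y ⊓ w) := by
  intro c' d' hc hcov hd
  refine step_down hcl h (hd.trans inf_le_left) hcov hxy (le_trans ?_ hc)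
  exact le_inf inf_le_left (inf_le_right.trans (hd.trans inf_le_right))

end Aux

/-- Let `L` be a lattice of finite length and `Q` a set of coverings of `L`.
Then `Q` is closed under subtransposition iff `Q = Cov(θ)` for some lattice
congruence `θ` of `L`. -/
theorem closed_under_subtransposition_iff_cov_of_congruence
    {L : Type*} [Lattice L] [BoundedOrder L]
    (hFL : ∃ N : ℕ, ∀ c : LTSeries L, c.length ≤ N)
    (Q : Set (L × L)) (hQ : ∀ pq ∈ Q, pq.1 ⋖ pq.2) :
    (∀ pq ∈ Q, ∀ c d : L,
        (UpperTranspose pq.1 pq.2 c d ∨ UpperTranspose c d pq.1 pq.2) →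
        ∀ c' d' : L, c ≤ c' → c' ⋖ d' → d' ≤ d → (c', d') ∈ Q)
    ↔ ∃ θ : Set (L × L), IsLatticeCon θ ∧ Q = {pq : L × L | pq.1 ⋖ pq.2 ∧ pq ∈ θ} := by
  constructor
  · intro hcl
    haveI := wfLT_of_bound hFL
    haveI := wfGT_of_bound hFL
    have trans' : ∀ u v w : L, QFull Q (u ⊓ v) (u ⊔ v) → QFull Q (v ⊓ w) (v ⊔ w) →
        QFull Q (u ⊓ w) (u ⊔ w) := by
      intro u v w h1 h2
      have h1' : QFull Q u (u ⊔ v) := h1.mono inf_le_left le_rfl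
      have h2' : QFull Q v (v ⊔ w) := h2.mono inf_le_left le_rfl
      have h3 : QFull Q (u ⊔ v) (u ⊔ v ⊔ w) :=
        (QFull.sup' hcl (u ⊔ v) le_sup_left h2').mono (sup_le le_sup_right le_rfl)
          (sup_le le_sup_right (le_sup_right.trans le_sup_left))
      have h4 : QFull Q u (u ⊔ v ⊔ w) := QFull.glue hcl le_sup_left le_sup_left h1' h3
      have h5 : QFull Q w (v ⊔ w) := h2.mono inf_le_right le_rfl
      have h6 : QFull Q v (u ⊔ v) := h1.mono inf_le_right le_rfl
      have h7 : QFull Q (v ⊔ w) (u ⊔ v ⊔ w) := QFull.sup' hcl w le_sup_right h6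
      have h8 : QFull Q w (u ⊔ v ⊔ w) :=
        QFull.glue hcl le_sup_right (sup_le (le_sup_right.trans le_sup_left) le_sup_right) h5 h7
      have h9 : QFull Q u (u ⊔ w) :=
        (QFull.inf' hcl (u ⊔ w) (le_sup_left.trans le_sup_left) h4).mono
          inf_le_left
          (le_inf (sup_le (le_sup_left.trans le_sup_left) le_sup_right) le_rfl)
      have h10 : QFull Q w (u ⊔ w) :=
        (QFull.inf' hcl (u ⊔ w) le_sup_right h8).mono
          inf_le_left
          (le_inf (sup_le (le_sup_left.trans le_sup_left) le_sup_right) le_rfl)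
      have h11 : QFull Q (u ⊓ w) u :=
        (QFull.inf' hcl u le_sup_right h10).mono
          (le_inf inf_le_right inf_le_left) (le_inf le_sup_left le_rfl)
      exact QFull.glue hcl inf_le_left le_sup_left h11 h9
    have key_sup : ∀ u v w : L, QFull Q (u ⊓ v) (u ⊔ v) →
        QFull Q ((u ⊔ w) ⊓ (v ⊔ w)) ((u ⊔ w) ⊔ (v ⊔ w)) := by
      intro u v w h
      refine (QFull.sup' hcl w inf_le_sup h).mono ?_ ?_
      · exact sup_le (le_inf (inf_le_left.trans le_sup_left) (inf_le_right.trans le_sup_left))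
          (le_inf le_sup_right le_sup_right)
      · exact sup_le (sup_le (le_sup_left.trans le_sup_left) le_sup_right)
          (sup_le (le_sup_right.trans le_sup_left) le_sup_right)
    have key_inf : ∀ u v w : L, QFull Q (u ⊓ v) (u ⊔ v) →
        QFull Q ((u ⊓ w) ⊓ (v ⊓ w)) ((u ⊓ w) ⊔ (v ⊓ w)) := by
      intro u v w h
      refine (QFull.inf' hcl w inf_le_sup h).mono ?_ ?_
      · exact le_inf (le_inf (inf_le_left.trans inf_le_left) inf_le_right)
          (le_inf (inf_le_left.trans inf_le_right) inf_le_right)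
      · exact sup_le (le_inf (inf_le_left.trans le_sup_left) inf_le_right)
          (le_inf (inf_le_left.trans le_sup_right) inf_le_right)
    refine ⟨{p : L × L | QFull Q (p.1 ⊓ p.2) (p.1 ⊔ p.2)}, ⟨⟨?_, ?_, ?_⟩, ?_⟩, ?_⟩
    · -- reflexivity
      intro a
      exact (QFull.refl Q a).mono (le_inf le_rfl le_rfl) (sup_le le_rfl le_rfl)
    · -- symmetry
      intro a b h
      exact QFull.mono h (le_inf inf_le_right inf_le_left) (sup_le le_sup_right le_sup_left)
    · -- transitivity
      intro a b c hab hbc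
      exact trans' a b c hab hbc
    · -- compatibility
      intro a b c d hab hcd
      simp only [Set.mem_setOf_eq] at hab hcd ⊢
      constructor
      · have hac : QFull Q ((a ⊔ c) ⊓ (b ⊔ c)) ((a ⊔ c) ⊔ (b ⊔ c)) := key_sup a b c hab
        have hbc0 : QFull Q ((c ⊔ b) ⊓ (d ⊔ b)) ((c ⊔ b) ⊔ (d ⊔ b)) := key_sup c d b hcd
        have hbc' : QFull Q ((b ⊔ c) ⊓ (b ⊔ d)) ((b ⊔ c) ⊔ (b ⊔ d)) := by
          refine hbc0.mono (le_inf ?_ ?_) (sup_le ?_ ?_)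
          · exact inf_le_left.trans (sup_le le_sup_right le_sup_left)
          · exact inf_le_right.trans (sup_le le_sup_right le_sup_left)
          · exact (sup_le le_sup_right le_sup_left).trans le_sup_left
          · exact (sup_le le_sup_right le_sup_left).trans le_sup_right
        exact trans' (a ⊔ c) (b ⊔ c) (b ⊔ d) hac hbc'
      · have hac : QFull Q ((a ⊓ c) ⊓ (b ⊓ c)) ((a ⊓ c) ⊔ (b ⊓ c)) := key_inf a b c hab
        have hbc0 : QFull Q ((c ⊓ b) ⊓ (d ⊓ b)) ((c ⊓ b) ⊔ (d ⊓ b)) := key_inf c d b hcd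
        have hbc' : QFull Q ((b ⊓ c) ⊓ (b ⊓ d)) ((b ⊓ c) ⊔ (b ⊓ d)) := by
          refine hbc0.mono (le_inf ?_ ?_) (sup_le ?_ ?_)
          · exact inf_le_left.trans (le_inf inf_le_right inf_le_left)
          · exact inf_le_right.trans (le_inf inf_le_right inf_le_left)
          · exact (le_inf inf_le_right inf_le_left).trans le_sup_left
          · exact (le_inf inf_le_right inf_le_left).trans le_sup_right
        exact trans' (a ⊓ c) (b ⊓ c) (b ⊓ d) hac hbc'
    · -- Q = Cov(θ)
      ext ⟨a, b⟩
      simp only [Set.mem_setOf_eq]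
      constructor
      · intro h
        have hab : a ⋖ b := hQ (a, b) h
        refine ⟨hab, ?_⟩
        intro c' d' hc hcov hd
        have hc2 : a ≤ c' := by
          rw [← inf_eq_left.mpr hab.le]; exact hc
        have hd2 : d' ≤ b := by
          rw [← sup_eq_right.mpr hab.le]; exact hd
        have hc' : c' = a := by
          rcases hab.wcovBy.eq_or_eq hc2 (hcov.le.trans hd2) with h' | h'
          · exact h'
          · exact absurd (hd2.trans h'.symm.le) hcov.lt.not_ge
        have hd' : d' = b := by
          rcases hab.wcovBy.eq_or_eq (hc2.trans hcov.le) hd2 with h' | h'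
          · exact absurd (h'.le.trans hc2) hcov.lt.not_ge
          · exact h'
        rw [hc', hd']
        exact h
      · rintro ⟨hab, hθ⟩
        exact hθ a b inf_le_left hab le_sup_right
  · -- easy direction
    rintro ⟨θ, ⟨hEq, hComp⟩, rfl⟩
    rintro ⟨a, b⟩ ⟨hab, habθ⟩ c d htr c' d' hcc' hcov hd'd
    dsimp only at hab htr
    refine ⟨hcov, ?_⟩
    have hcd : (c, d) ∈ θ := by
      rcases htr with ⟨h1, h2⟩ | ⟨h1, h2⟩
      -- upper transpose: a = b ⊓ c, d = b ⊔ c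
      · have h3 := (hComp a b c c habθ (hEq.refl c)).1
        have hac : a ⊔ c = c := sup_eq_right.mpr (h1 ▸ inf_le_right)
        rwa [hac, ← h2] at h3
      -- lower transpose: c = d ⊓ a, b = d ⊔ a
      · have h3 := (hComp a b d d habθ (hEq.refl d)).2
        have had : a ⊓ d = c := by rw [inf_comm, ← h1]
        have hbd : b ⊓ d = d := inf_eq_right.mpr (h2 ▸ le_sup_left)
        rwa [had, hbd] at h3
    have h3 := (hComp c d c' c' hcd (hEq.refl c')).1
    have hcc : c ⊔ c' = c' := sup_eq_right.mpr hcc'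
    rw [hcc] at h3
    have h4 := (hComp c' (d ⊔ c') d' d' h3 (hEq.refl d')).2
    have h5 : c' ⊓ d' = c' := inf_eq_left.mpr hcov.le
    have h6 : (d ⊔ c') ⊓ d' = d' := inf_eq_right.mpr (hd'd.trans le_sup_left)
    rwa [h5, h6] at h4
end

section
/- For every lattice L of finite length, the congruence lattice Con(L) is a distributive lattice. -/
namespace ConAux

variable {L : Type*} [Lattice L]

lemma refl' {θ : Set (L × L)} (h : IsLatticeCon θ) (a : L) : (a, a) ∈ θ := h.1.refl a
lemma symm' {θ : Set (L × L)} (h : IsLatticeCon θ) {a b : L} (hab : (a, b) ∈ θ) : (b, a) ∈ θ :=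
  h.1.symm hab
lemma trans' {θ : Set (L × L)} (h : IsLatticeCon θ) {a b c : L} (h1 : (a, b) ∈ θ)
    (h2 : (b, c) ∈ θ) : (a, c) ∈ θ := h.1.trans h1 h2
lemma sup' {θ : Set (L × L)} (h : IsLatticeCon θ) {a b c d : L} (h1 : (a, b) ∈ θ)
    (h2 : (c, d) ∈ θ) : (a ⊔ c, b ⊔ d) ∈ θ := (h.2 a b c d h1 h2).1
lemma inf' {θ : Set (L × L)} (h : IsLatticeCon θ) {a b c d : L} (h1 : (a, b) ∈ θ)
    (h2 : (c, d) ∈ θ) : (a ⊓ c, b ⊓ d) ∈ θ := (h.2 a b c d h1 h2).2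

lemma inf_sup_mem {θ : Set (L × L)} (h : IsLatticeCon θ) {a b : L} (hab : (a, b) ∈ θ) :
    (a ⊓ b, a ⊔ b) ∈ θ := by
  have h1 : (a ⊓ b, b) ∈ θ := by simpa using inf' h hab (refl' h b)
  have h2 : (a ⊔ b, b) ∈ θ := by simpa using sup' h hab (refl' h b)
  exact trans' h h1 (symm' h h2)

lemma mem_of_inf_sup {θ : Set (L × L)} (h : IsLatticeCon θ) {a b : L}
    (hm : (a ⊓ b, a ⊔ b) ∈ θ) : (a, b) ∈ θ := by
  have h1 : (a, a ⊔ b) ∈ θ := by simpa using sup' h hm (refl' h a)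
  have h2 : (b, a ⊔ b) ∈ θ := by simpa using sup' h hm (refl' h b)
  exact trans' h h1 (symm' h h2)

lemma convex' {θ : Set (L × L)} (h : IsLatticeCon θ) {m M u v : L} (hmM : (m, M) ∈ θ)
    (h1 : m ≤ u) (h2 : u ≤ v) (h3 : v ≤ M) : (u, v) ∈ θ := by
  have hA : (u, M) ∈ θ := by
    have := sup' h hmM (refl' h u)
    simpa [sup_eq_right.mpr h1, sup_eq_left.mpr (h2.trans h3)] using this
  have := inf' h hA (refl' h v)
  simpa [inf_eq_left.mpr h2, inf_eq_right.mpr h3] using this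

lemma inter_isCon {θ φ : Set (L × L)} (hθ : IsLatticeCon θ) (hφ : IsLatticeCon φ) :
    IsLatticeCon (θ ∩ φ) := by
  refine ⟨⟨fun a => ⟨refl' hθ a, refl' hφ a⟩, fun h => ⟨symm' hθ h.1, symm' hφ h.2⟩,
    fun h1 h2 => ⟨trans' hθ h1.1 h2.1, trans' hφ h1.2 h2.2⟩⟩, ?_⟩
  intro a b c d h1 h2
  exact ⟨⟨sup' hθ h1.1 h2.1, sup' hφ h1.2 h2.2⟩, ⟨inf' hθ h1.1 h2.1, inf' hφ h1.2 h2.2⟩⟩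

def steprel (θ φ : Set (L × L)) (a b : L) : Prop := (a, b) ∈ θ ∨ (a, b) ∈ φ

def conJoin (θ φ : Set (L × L)) : Set (L × L) :=
  {p | Relation.ReflTransGen (steprel θ φ) p.1 p.2}

lemma conJoin_isCon {θ φ : Set (L × L)} (hθ : IsLatticeCon θ) (hφ : IsLatticeCon φ) :
    IsLatticeCon (conJoin θ φ) := by
  have hsym : Symmetric (steprel θ φ) := by
    rintro a b (h | h)
    · exact Or.inl (symm' hθ h)
    · exact Or.inr (symm' hφ h)
  have hsupl : ∀ c : L, ∀ a b : L, steprel θ φ a b → steprel θ φ (a ⊔ c) (b ⊔ c) := by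
    rintro c a b (h | h)
    · exact Or.inl (sup' hθ h (refl' hθ c))
    · exact Or.inr (sup' hφ h (refl' hφ c))
  have hsupr : ∀ c : L, ∀ a b : L, steprel θ φ a b → steprel θ φ (c ⊔ a) (c ⊔ b) := by
    rintro c a b (h | h)
    · exact Or.inl (sup' hθ (refl' hθ c) h)
    · exact Or.inr (sup' hφ (refl' hφ c) h)
  have hinfl : ∀ c : L, ∀ a b : L, steprel θ φ a b → steprel θ φ (a ⊓ c) (b ⊓ c) := by
    rintro c a b (h | h)
    · exact Or.inl (inf' hθ h (refl' hθ c))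
    · exact Or.inr (inf' hφ h (refl' hφ c))
  have hinfr : ∀ c : L, ∀ a b : L, steprel θ φ a b → steprel θ φ (c ⊓ a) (c ⊓ b) := by
    rintro c a b (h | h)
    · exact Or.inl (inf' hθ (refl' hθ c) h)
    · exact Or.inr (inf' hφ (refl' hφ c) h)
  constructor
  · exact ⟨fun a => Relation.ReflTransGen.refl,
      fun h => by
        haveI : Std.Symm (steprel θ φ) := ⟨fun _ _ h => hsym h⟩
        exact Std.Symm.symm _ _ h,
      fun h1 h2 => Relation.ReflTransGen.trans h1 h2⟩
  · intro a b c d hab hcd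
    constructor
    · exact Relation.ReflTransGen.trans
        (Relation.ReflTransGen.lift (· ⊔ c) (hsupl c) _ _ hab)
        (Relation.ReflTransGen.lift (b ⊔ ·) (hsupr b) _ _ hcd)
    · exact Relation.ReflTransGen.trans
        (Relation.ReflTransGen.lift (· ⊓ c) (hinfl c) _ _ hab)
        (Relation.ReflTransGen.lift (b ⊓ ·) (hinfr b) _ _ hcd)

lemma left_subset_conJoin {θ φ : Set (L × L)} : θ ⊆ conJoin θ φ := by
  rintro ⟨a, b⟩ h
  exact Relation.ReflTransGen.single (Or.inl h)

lemma right_subset_conJoin {θ φ : Set (L × L)} : φ ⊆ conJoin θ φ := by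
  rintro ⟨a, b⟩ h
  exact Relation.ReflTransGen.single (Or.inr h)

lemma conJoin_subset {θ φ w : Set (L × L)} (hw : IsLatticeCon w) (h1 : θ ⊆ w) (h2 : φ ⊆ w) :
    conJoin θ φ ⊆ w := by
  suffices H : ∀ a b : L, Relation.ReflTransGen (steprel θ φ) a b → (a, b) ∈ w by
    rintro ⟨a, b⟩ h; exact H a b h
  intro a b h
  induction h with
  | refl => exact refl' hw a
  | tail _ hstep ih => exact trans' hw ih (hstep.elim (fun h => h1 h) (fun h => h2 h))

/-- The key monotonization induction. -/
lemma chain_lemma {x y z : Set (L × L)} (hx : IsLatticeCon x) (hy : IsLatticeCon y)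
    (hz : IsLatticeCon z) {m M : L} (hmM : (m, M) ∈ x) (hmle : m ≤ M) :
    ∀ {c b : L}, Relation.ReflTransGen (steprel y z) c b →
      ∀ u, m ≤ u → u ≤ M → (c ⊔ m) ⊓ M ≤ u →
      ∃ v, (b ⊔ m) ⊓ M ≤ v ∧ v ≤ M ∧
        Relation.ReflTransGen (steprel (x ∩ y) (x ∩ z)) u v := by
  intro c b h
  induction h using Relation.ReflTransGen.head_induction_on with
  | refl => exact fun u h1 h2 h3 => ⟨u, h3, h2, Relation.ReflTransGen.refl⟩
  | head hstep _ ih =>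
    rename_i c c' _
    intro u h1 h2 h3
    set g : L → L := fun w => (w ⊔ m) ⊓ M with hg
    have hgM : ∀ w, g w ≤ M := fun w => inf_le_right
    have hu' : u ⊔ g c' ≤ M := sup_le h2 (hgM c')
    have hmu' : m ≤ u ⊔ g c' := h1.trans le_sup_left
    have hxstep : (u, u ⊔ g c') ∈ x := convex' hx hmM h1 le_sup_left hu'
    have hstep' : steprel (x ∩ y) (x ∩ z) u (u ⊔ g c') := by
      rcases hstep with h | h
      · have hgy : (g c, g c') ∈ y := inf' hy (sup' hy h (refl' hy m)) (refl' hy M)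
        have : (u ⊔ g c, u ⊔ g c') ∈ y := sup' hy (refl' hy u) hgy
        rw [sup_eq_left.mpr h3] at this
        exact Or.inl ⟨hxstep, this⟩
      · have hgz : (g c, g c') ∈ z := inf' hz (sup' hz h (refl' hz m)) (refl' hz M)
        have : (u ⊔ g c, u ⊔ g c') ∈ z := sup' hz (refl' hz u) hgz
        rw [sup_eq_left.mpr h3] at this
        exact Or.inr ⟨hxstep, this⟩
    obtain ⟨v, hv1, hv2, hv3⟩ := ih (u ⊔ g c') hmu' hu' le_sup_right
    exact ⟨v, hv1, hv2, Relation.ReflTransGen.head hstep' hv3⟩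

lemma distrib_sets {x y z : Set (L × L)} (hx : IsLatticeCon x) (hy : IsLatticeCon y)
    (hz : IsLatticeCon z) :
    x ∩ conJoin y z = conJoin (x ∩ y) (x ∩ z) := by
  have hJ' : IsLatticeCon (conJoin (x ∩ y) (x ∩ z)) :=
    conJoin_isCon (inter_isCon hx hy) (inter_isCon hx hz)
  apply Set.Subset.antisymm
  · rintro ⟨a, b⟩ ⟨habx, habj⟩
    set m := a ⊓ b
    set M := a ⊔ b
    have hmle : m ≤ M := inf_le_sup
    have hmMx : (m, M) ∈ x := inf_sup_mem hx habx
    have hmMJ : (m, M) ∈ conJoin y z := inf_sup_mem (conJoin_isCon hy hz) habj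
    obtain ⟨v, hv1, hv2, hv3⟩ := chain_lemma hx hy hz hmMx hmle hmMJ m le_rfl hmle
      (by simp [hmle])
    have hvM : v = M := le_antisymm hv2 (by simpa [sup_eq_left.mpr hmle] using hv1)
    have : (m, M) ∈ conJoin (x ∩ y) (x ∩ z) := hvM ▸ hv3
    exact mem_of_inf_sup hJ' this
  · exact conJoin_subset (inter_isCon hx (conJoin_isCon hy hz))
      (fun p hp => ⟨hp.1, left_subset_conJoin hp.2⟩)
      (fun p hp => ⟨hp.1, right_subset_conJoin hp.2⟩)

lemma isLUB_conJoin (x y : {θ : Set (L × L) // IsLatticeCon θ}) :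
    IsLUB {x, y} (⟨conJoin x.1 y.1, conJoin_isCon x.2 y.2⟩ :
      {θ : Set (L × L) // IsLatticeCon θ}) := by
  constructor
  · rintro w (rfl | rfl)
    · exact (left_subset_conJoin : w.1 ⊆ _)
    · exact (right_subset_conJoin : w.1 ⊆ _)
  · intro w hw
    have hx : x ≤ w := hw (Set.mem_insert _ _)
    have hy : y ≤ w := hw (Set.mem_insert_of_mem _ rfl)
    exact conJoin_subset w.2 hx hy

lemma isGLB_inter (x y : {θ : Set (L × L) // IsLatticeCon θ}) :
    IsGLB {x, y} (⟨x.1 ∩ y.1, inter_isCon x.2 y.2⟩ :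
      {θ : Set (L × L) // IsLatticeCon θ}) := by
  constructor
  · rintro w (rfl | rfl)
    · exact (Set.inter_subset_left : _ ⊆ w.1)
    · exact (Set.inter_subset_right : _ ⊆ w.1)
  · intro w hw
    have hx : w ≤ x := hw (Set.mem_insert _ _)
    have hy : w ≤ y := hw (Set.mem_insert_of_mem _ rfl)
    exact Set.subset_inter hx hy

end ConAux

open ConAux in
/-- For every lattice `L` of finite length, the congruence lattice `Con(L)`
(congruences ordered by inclusion) is a distributive lattice: binary joins and
meets exist, and the distributive law `x ⊓ (y ⊔ z) = (x ⊓ y) ⊔ (x ⊓ z)` holds. -/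
theorem conLattice_distributive
    {L : Type*} [Lattice L] [BoundedOrder L]
    (hFL : ∃ N : ℕ, ∀ c : LTSeries L, c.length ≤ N) :
    (∀ x y : {θ : Set (L × L) // IsLatticeCon θ},
        (∃ j, IsLUB {x, y} j) ∧ (∃ m, IsGLB {x, y} m)) ∧
    (∀ x y z j m mxy mxz j' : {θ : Set (L × L) // IsLatticeCon θ},
        IsLUB {y, z} j → IsGLB {x, j} m →
        IsGLB {x, y} mxy → IsGLB {x, z} mxz → IsLUB {mxy, mxz} j' →
        m = j') := by
  constructor
  · intro x y
    exact ⟨⟨_, isLUB_conJoin x y⟩, ⟨_, isGLB_inter x y⟩⟩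
  · intro x y z j m mxy mxz j' hj hm hmxy hmxz hj'
    have hjv : j = ⟨conJoin y.1 z.1, conJoin_isCon y.2 z.2⟩ := hj.unique (isLUB_conJoin y z)
    subst hjv
    have hmv : m = ⟨x.1 ∩ conJoin y.1 z.1, _⟩ := hm.unique (isGLB_inter x _)
    have hmxyv : mxy = ⟨x.1 ∩ y.1, inter_isCon x.2 y.2⟩ := hmxy.unique (isGLB_inter x y)
    have hmxzv : mxz = ⟨x.1 ∩ z.1, inter_isCon x.2 z.2⟩ := hmxz.unique (isGLB_inter x z)
    subst hmxyv hmxzv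
    have hj'v : j' = ⟨conJoin (x.1 ∩ y.1) (x.1 ∩ z.1), _⟩ := hj'.unique (isLUB_conJoin _ _)
    rw [hmv, hj'v]
    exact Subtype.ext (distrib_sets x.2 y.2 z.2)
end

section
/- For every lattice L of finite length, the number of congruences of L is at most 2^{s(L)}, where s(L) is the number of homogeneous-projectivity classes of coverings of L. -/
/-- Two coverings are transposed (one is an upper transpose of the other). -/
def TranspCov {L : Type*} [Lattice L] (x y : L × L) : Prop :=
  x.1 ⋖ x.2 ∧ y.1 ⋖ y.2 ∧
    (UpperTranspose x.1 x.2 y.1 y.2 ∨ UpperTranspose y.1 y.2 x.1 x.2)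

section Aux

variable {L : Type*} [Lattice L] {θ : Set (L × L)}

/-- Membership of a covering in a congruence is invariant under upper transposition. -/
lemma upperTranspose_mem_iff (hθ : IsLatticeCon θ) {a b c d : L}
    (h : UpperTranspose a b c d) : (a, b) ∈ θ ↔ (c, d) ∈ θ := by
  obtain ⟨h1, h2⟩ := h
  constructor
  · intro hm
    have key := (hθ.2 a b c c hm (hθ.1.refl c)).1
    have e1 : a ⊔ c = c := sup_eq_right.mpr (by rw [h1]; exact inf_le_right)
    have e2 : b ⊔ c = d := h2.symm
    rwa [e1, e2] at key
  · intro hm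
    have key := (hθ.2 c d b b hm (hθ.1.refl b)).2
    have e1 : c ⊓ b = a := by rw [inf_comm, ← h1]
    have e2 : d ⊓ b = b := inf_eq_right.mpr (by rw [h2]; exact le_sup_left)
    rwa [e1, e2] at key

lemma transpCov_mem_iff (hθ : IsLatticeCon θ) {x y : L × L} (h : TranspCov x y) :
    (x ∈ θ ↔ y ∈ θ) := by
  obtain ⟨_, _, hor | hor⟩ := h
  · exact upperTranspose_mem_iff hθ hor
  · exact (upperTranspose_mem_iff hθ hor).symm

lemma eqvGen_mem_iff (hθ : IsLatticeCon θ)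
    {p q : {pq : L × L // pq.1 ⋖ pq.2}}
    (h : Relation.EqvGen (fun x y : {pq : L × L // pq.1 ⋖ pq.2} => TranspCov x.val y.val) p q) :
    (p.val ∈ θ ↔ q.val ∈ θ) := by
  induction h with
  | rel x y hxy => exact transpCov_mem_iff hθ hxy
  | refl x => exact Iff.rfl
  | symm x y _ ih => exact ih.symm
  | trans x y z _ _ ih1 ih2 => exact ih1.trans ih2

/-- A congruence relates `a` and `b` iff it relates `a ⊓ b` and `a ⊔ b`. -/
lemma mem_iff_inf_sup (hθ : IsLatticeCon θ) (a b : L) :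
    (a, b) ∈ θ ↔ (a ⊓ b, a ⊔ b) ∈ θ := by
  constructor
  · intro hm
    have hinf : (a, a ⊓ b) ∈ θ := by
      have := (hθ.2 a b a a hm (hθ.1.refl a)).2
      simpa [inf_comm] using this
    have hsup : (a, a ⊔ b) ∈ θ := by
      have := (hθ.2 a b a a hm (hθ.1.refl a)).1
      simpa [sup_comm] using this
    exact hθ.1.trans (hθ.1.symm hinf) hsup
  · intro hm
    have ha : (a ⊓ b, a) ∈ θ := by
      have := (hθ.2 _ _ a a hm (hθ.1.refl a)).2
      simpa [inf_assoc, inf_comm] using this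
    have hb : (a ⊓ b, b) ∈ θ := by
      have := (hθ.2 _ _ b b hm (hθ.1.refl b)).2
      simpa [inf_assoc, inf_comm, inf_left_comm] using this
    exact hθ.1.trans (hθ.1.symm ha) hb

/-- If a congruence relates `a ≤ b`, it relates every covering inside `[a, b]`. -/
lemma cov_mem_of_mem (hθ : IsLatticeCon θ) {a b x y : L}
    (hm : (a, b) ∈ θ) (hax : a ≤ x) (hxy : x ≤ y) (hyb : y ≤ b) :
    (x, y) ∈ θ := by
  have h1 : (x, b) ∈ θ := by
    have := (hθ.2 a b x x hm (hθ.1.refl x)).1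
    rwa [sup_eq_right.mpr hax, sup_eq_left.mpr (hxy.trans hyb)] at this
  have := (hθ.2 x b y y h1 (hθ.1.refl y)).2
  rwa [inf_eq_left.mpr hxy, inf_eq_right.mpr hyb] at this

/-- Two congruences collapsing the same coverings agree on comparable pairs,
by induction on a bound for the lengths of chains. -/
lemma mem_of_covers (hθ₁ : IsLatticeCon θ) {θ₂ : Set (L × L)} (hθ₂ : IsLatticeCon θ₂)
    (hcov : ∀ x y : L, x ⋖ y → (x, y) ∈ θ → (x, y) ∈ θ₂) :
    ∀ n : ℕ, ∀ a b : L, a ≤ b →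
      (∀ s : LTSeries L, s.head = a → s.last = b → s.length ≤ n) →
      (a, b) ∈ θ → (a, b) ∈ θ₂ := by
  intro n
  induction n with
  | zero =>
    intro a b hab hbd _
    rcases eq_or_lt_of_le hab with rfl | hlt
    · exact hθ₂.1.refl a
    · exfalso
      have := hbd ((RelSeries.singleton _ a).snoc b hlt) (RelSeries.head_snoc _ _ _) (RelSeries.last_snoc _ _ _)
      exact Nat.not_succ_le_zero _ this
  | succ n ih =>
    intro a b hab hbd hm
    rcases eq_or_lt_of_le hab with rfl | hlt
    · exact hθ₂.1.refl a
    by_cases hcv : a ⋖ b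
    · exact hcov a b hcv hm
    · obtain ⟨c, hac, hcb⟩ := (not_covBy_iff hlt).mp hcv
      have hm1 : (a, c) ∈ θ := cov_mem_of_mem hθ₁ hm le_rfl hac.le hcb.le
      have hm2 : (c, b) ∈ θ := cov_mem_of_mem hθ₁ hm hac.le hcb.le le_rfl
      have b1 : ∀ s : LTSeries L, s.head = a → s.last = c → s.length ≤ n := by
        intro s hh hl
        have := hbd (s.snoc b (hl ▸ hcb)) (by simpa using hh) (by simp)
        simpa using this
      have b2 : ∀ s : LTSeries L, s.head = c → s.last = b → s.length ≤ n := by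
        intro s hh hl
        have := hbd (s.cons a (hh ▸ hac)) (by simp) (by simpa using hl)
        simpa using this
      exact hθ₂.1.trans (ih a c hac.le b1 hm1) (ih c b hcb.le b2 hm2)

/-- A congruence of a finite-length lattice is determined by the coverings it collapses. -/
lemma con_eq_of_covers {θ₂ : Set (L × L)} (hθ₁ : IsLatticeCon θ) (hθ₂ : IsLatticeCon θ₂)
    {N : ℕ} (hN : ∀ c : LTSeries L, c.length ≤ N)
    (hcov : ∀ x y : L, x ⋖ y → ((x, y) ∈ θ ↔ (x, y) ∈ θ₂)) : θ = θ₂ := by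
  have key : ∀ (σ τ : Set (L × L)), IsLatticeCon σ → IsLatticeCon τ →
      (∀ x y : L, x ⋖ y → (x, y) ∈ σ → (x, y) ∈ τ) → σ ⊆ τ := by
    intro σ τ hσ hτ hc p hp
    obtain ⟨a, b⟩ := p
    rw [mem_iff_inf_sup hσ] at hp
    rw [mem_iff_inf_sup hτ]
    exact mem_of_covers hσ hτ hc N _ _ inf_le_sup (fun s _ _ => hN s) hp
  exact le_antisymm
    (key θ θ₂ hθ₁ hθ₂ fun x y h => (hcov x y h).mp)
    (key θ₂ θ hθ₂ hθ₁ fun x y h => (hcov x y h).mpr)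

end Aux

/-- For every lattice `L` of finite length, the number of congruences of `L` is at
most `2 ^ s(L)`, where `s(L)` is the number of homogeneous-projectivity classes of
coverings (the classes of the quotient of the set of coverings by the equivalence
generated by transposition of coverings). -/
theorem card_con_le_two_pow_homProjClasses
    {L : Type*} [Lattice L] [BoundedOrder L]
    (hFL : ∃ N : ℕ, ∀ c : LTSeries L, c.length ≤ N) :
    Cardinal.mk {θ : Set (L × L) // IsLatticeCon θ} ≤
      2 ^ Cardinal.mk
        (Quot fun x y : {pq : L × L // pq.1 ⋖ pq.2} => TranspCov x.val y.val) := by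
  obtain ⟨N, hN⟩ := hFL
  have hle : Cardinal.mk {θ : Set (L × L) // IsLatticeCon θ} ≤
      Cardinal.mk (Set (Quot fun x y : {pq : L × L // pq.1 ⋖ pq.2} =>
        TranspCov x.val y.val)) := by
    apply Cardinal.mk_le_of_injective
      (f := fun θ : {θ : Set (L × L) // IsLatticeCon θ} =>
        Quot.mk _ '' {p : {pq : L × L // pq.1 ⋖ pq.2} | p.val ∈ θ.val})
    intro θ₁ θ₂ hset
    have hdir : ∀ (σ τ : {θ : Set (L × L) // IsLatticeCon θ}),
        Quot.mk (fun x y : {pq : L × L // pq.1 ⋖ pq.2} => TranspCov x.val y.val) ''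
            {p : {pq : L × L // pq.1 ⋖ pq.2} | p.val ∈ σ.val} =
          Quot.mk (fun x y : {pq : L × L // pq.1 ⋖ pq.2} => TranspCov x.val y.val) ''
            {p : {pq : L × L // pq.1 ⋖ pq.2} | p.val ∈ τ.val} →
        ∀ x y : L, x ⋖ y → (x, y) ∈ σ.val → (x, y) ∈ τ.val := by
      intro σ τ h x y hxy hm
      have hmem : Quot.mk (fun x y : {pq : L × L // pq.1 ⋖ pq.2} => TranspCov x.val y.val)
            (⟨(x, y), hxy⟩ : {pq : L × L // pq.1 ⋖ pq.2}) ∈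
          Quot.mk (fun x y : {pq : L × L // pq.1 ⋖ pq.2} => TranspCov x.val y.val) ''
            {p : {pq : L × L // pq.1 ⋖ pq.2} | p.val ∈ σ.val} :=
        ⟨⟨(x, y), hxy⟩, hm, rfl⟩
      rw [h] at hmem
      obtain ⟨q, hq, hqe⟩ := hmem
      have heq := Quot.eqvGen_exact hqe
      exact (eqvGen_mem_iff τ.2 heq).mp hq
    apply Subtype.ext
    exact con_eq_of_covers θ₁.2 θ₂.2 hN
      (fun x y h => ⟨hdir θ₁ θ₂ hset x y h, hdir θ₂ θ₁ hset.symm x y h⟩)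
  calc Cardinal.mk {θ : Set (L × L) // IsLatticeCon θ} ≤ _ := hle
    _ = _ := Cardinal.mk_set
end

section
/- Let L be a modular lattice of finite length and let P be a projectivity class of coverings of L. Then every maximal chain from 0 to 1 in L contains the same number of coverings belonging to P. -/
/-- Two (nontrivial) intervals are transposed. -/
def TranspInt {L : Type*} [Lattice L] (x y : L × L) : Prop :=
  x.1 < x.2 ∧ y.1 < y.2 ∧
    (UpperTranspose x.1 x.2 y.1 y.2 ∨ UpperTranspose y.1 y.2 x.1 x.2)

/-- Projectivity: the equivalence generated by transposition of intervals. -/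
def ProjInt {L : Type*} [Lattice L] : L × L → L × L → Prop :=
  Relation.EqvGen TranspInt

/-- A modular lattice is a Jordan–Hölder lattice with `IsMaximal := (· ⋖ ·)` and
`Iso := ProjInt`. -/
def modularJHL (L : Type*) [Lattice L] [IsModularLattice L] : JordanHolderLattice L where
  IsMaximal := (· ⋖ ·)
  lt_of_isMaximal h := h.lt
  sup_eq_of_isMaximal {x y z} hx hy hne := by
    have hle : x ⊔ y ≤ z := sup_le hx.lt.le hy.lt.le
    have hxlt : x < x ⊔ y := by
      rcases lt_or_eq_of_le (le_sup_left : x ≤ x ⊔ y) with h | h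
      · exact h
      · exfalso
        have hyx : y < x := lt_of_le_of_ne (by simpa [← h] using (le_sup_right : y ≤ x ⊔ y)) (Ne.symm hne)
        exact hy.2 hyx hx.lt
    exact ((lt_or_eq_of_le hle).resolve_left (hx.2 hxlt))
  isMaximal_inf_left_of_isMaximal_sup {x y} hx hy := by
    have := inf_covBy_of_covBy_sup_right (a := x) (b := y) hy
    exact this

/-- Let `L` be a modular lattice of finite length and `P` a projectivity class of
coverings of `L`. Then any two maximal chains from `⊥` to `⊤` (chains all of whose
steps are coverings) contain the same number of coverings belonging to `P`. -/
theorem maximal_chains_same_number_of_coverings_in_class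
    {L : Type*} [Lattice L] [BoundedOrder L] [IsModularLattice L]
    (hFL : ∃ N : ℕ, ∀ c : LTSeries L, c.length ≤ N)
    (P : Set (L × L))
    (hP : ∃ x : L × L, x.1 ⋖ x.2 ∧ P = {y : L × L | y.1 ⋖ y.2 ∧ ProjInt x y})
    (c₁ c₂ : RelSeries {p : L × L | p.1 ⋖ p.2})
    (h₁b : c₁.head = ⊥) (h₁t : c₁.last = ⊤)
    (h₂b : c₂.head = ⊥) (h₂t : c₂.last = ⊤) :
    Nat.card {i : Fin c₁.length // (c₁.toFun i.castSucc, c₁.toFun i.succ) ∈ P} =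
    Nat.card {i : Fin c₂.length // (c₂.toFun i.castSucc, c₂.toFun i.succ) ∈ P} := by
  obtain ⟨x₀, hx₀, rfl⟩ := hP
  letI : JordanHolderLattice L := modularJHL L
  have hmax : JordanHolderLattice.IsMaximal (X := L) = (· ⋖ ·) := rfl
  let s₁ : CompositionSeries L := ⟨c₁.length, c₁.toFun, c₁.step⟩
  let s₂ : CompositionSeries L := ⟨c₂.length, c₂.toFun, c₂.step⟩
  obtain ⟨e, he⟩ := CompositionSeries.jordan_holder s₁ s₂
    (by show c₁.head = c₂.head; rw [h₁b, h₂b])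
    (by show c₁.last = c₂.last; rw [h₁t, h₂t])
  refine Nat.card_congr (Equiv.subtypeEquiv e fun i => ?_)
  have hproj : ProjInt (c₁.toFun i.castSucc, c₁.toFun i.succ)
      (c₂.toFun (e i).castSucc, c₂.toFun (e i).succ) :=
    JordanHolderLattice.Iso.rel ProjInt (Relation.EqvGen.refl _)
      (fun h => Relation.EqvGen.symm _ _ h) (fun h₁ h₂ => Relation.EqvGen.trans _ _ _ h₁ h₂)
      (fun {x y} (h : x ⋖ x ⊔ y) => by
        refine Relation.EqvGen.rel _ _ ⟨h.lt, (inf_covBy_of_covBy_sup_left h).lt, Or.inr ?_⟩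
        exact ⟨by rw [inf_comm], by rw [sup_comm]⟩) (he i)
  constructor
  · rintro ⟨-, hpr⟩
    exact ⟨c₂.step (e i), Relation.EqvGen.trans _ _ _ hpr hproj⟩
  · rintro ⟨-, hpr⟩
    exact ⟨c₁.step i, Relation.EqvGen.trans _ _ _ hpr (Relation.EqvGen.symm _ _ hproj)⟩
end

section
/- Let L be a modular lattice of finite length with projectivity classes of coverings P₁, …, P_s (s = s(L)). For each i let θᵢ be the unique co-atom of Con(L) whose covering set Cov(θᵢ) is the union of all P_j with j ≠ i, and let φᵢ : L → L/θᵢ be the canonical epimorphism. Then φᵢ maps J(Pᵢ) := {p ∈ J(L) : (p_*, p) ∈ Pᵢ} bijectively onto J(L/θᵢ); consequently j(L) = j(L/θ₁) + ⋯ + j(L/θ_s). -/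
/-- `f` is a lattice homomorphism. -/
def IsLatHom {L K : Type*} [Lattice L] [Lattice K] (f : L → K) : Prop :=
  ∀ a b : L, f (a ⊔ b) = f a ⊔ f b ∧ f (a ⊓ b) = f a ⊓ f b



section Helpers
variable {L : Type*} [Lattice L]

lemma no_ascending (hFL : ∃ N : ℕ, ∀ c : LTSeries L, c.length ≤ N)
    (g : ℕ → L) (hg : ∀ n, g n < g (n + 1)) : False := by
  obtain ⟨N, hN⟩ := hFL
  have h := hN ⟨N + 1, fun i => g i, fun i => by
    simpa using hg i⟩
  have : N + 1 ≤ N := h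
  omega

lemma no_descending (hFL : ∃ N : ℕ, ∀ c : LTSeries L, c.length ≤ N)
    (g : ℕ → L) (hg : ∀ n, g (n + 1) < g n) : False := by
  obtain ⟨N, hN⟩ := hFL
  have h := hN ⟨N + 1, fun i => g (N + 1 - i), fun i => by
    have hi : (i : ℕ) < N + 1 := i.isLt
    have h1 : N + 1 - ((i.castSucc : Fin (N + 2)) : ℕ) = (N - i) + 1 := by
      simp only [Fin.coe_castSucc]; omega
    have h2 : N + 1 - ((i.succ : Fin (N + 2)) : ℕ) = N - i := by
      simp only [Fin.val_succ]; omega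
    show g (N + 1 - (i.castSucc : Fin (N+2))) < g (N + 1 - (i.succ : Fin (N+2)))
    rw [h1, h2]
    exact hg _⟩
  have : N + 1 ≤ N := h
  omega

lemma exists_minimal_mem (hFL : ∃ N : ℕ, ∀ c : LTSeries L, c.length ≤ N)
    {S : Set L} (hS : S.Nonempty) : ∃ p ∈ S, ∀ x ∈ S, ¬x < p := by
  by_contra h
  push_neg at h
  obtain ⟨p0, hp0⟩ := hS
  have h' : ∀ x : S, ∃ y : S, (y : L) < x := by
    rintro ⟨x, hx⟩
    obtain ⟨y, hy, hlt⟩ := h x hx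
    exact ⟨⟨y, hy⟩, hlt⟩
  choose F hF using h'
  exact no_descending hFL (fun n => (F^[n] ⟨p0, hp0⟩ : L))
    (fun n => by
      show ((F^[n + 1] ⟨p0, hp0⟩ : S) : L) < ((F^[n] ⟨p0, hp0⟩ : S) : L)
      rw [Function.iterate_succ_apply']
      exact hF _)

lemma exists_maximal_mem (hFL : ∃ N : ℕ, ∀ c : LTSeries L, c.length ≤ N)
    {S : Set L} (hS : S.Nonempty) : ∃ p ∈ S, ∀ x ∈ S, ¬p < x := by
  by_contra h
  push_neg at h
  obtain ⟨p0, hp0⟩ := hS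
  have h' : ∀ x : S, ∃ y : S, (x : L) < y := by
    rintro ⟨x, hx⟩
    obtain ⟨y, hy, hlt⟩ := h x hx
    exact ⟨⟨y, hy⟩, hlt⟩
  choose F hF using h'
  exact no_ascending hFL (fun n => (F^[n] ⟨p0, hp0⟩ : L))
    (fun n => by
      show ((F^[n] ⟨p0, hp0⟩ : S) : L) < ((F^[n + 1] ⟨p0, hp0⟩ : S) : L)
      rw [Function.iterate_succ_apply']
      exact hF _)

lemma exists_cover_of_not_isMin (hFL : ∃ N : ℕ, ∀ c : LTSeries L, c.length ≤ N)
    {p : L} (hp : ¬IsMin p) : ∃ ps : L, ps ⋖ p := by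
  have hne : ({x : L | x < p}).Nonempty := by
    rw [IsMin] at hp
    push_neg at hp
    obtain ⟨b, hb1, hb2⟩ := hp
    exact ⟨b, lt_of_le_not_ge hb1 hb2⟩
  obtain ⟨x, hx, hmax⟩ := exists_maximal_mem hFL hne
  exact ⟨x, hx, fun c hc hcp => hmax c hcp hc⟩

lemma cover_le_of_lt {p ps x : L} (hp : SupIrred p) (hps : ps ⋖ p) (hx : x < p) :
    x ≤ ps := by
  have hle : x ⊔ ps ≤ p := sup_le hx.le hps.lt.le
  have hne : x ⊔ ps ≠ p := by
    intro h
    rcases hp.2 h with h1 | h1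
    · exact hx.ne h1
    · exact hps.lt.ne h1
  have hlt : x ⊔ ps < p := lt_of_le_of_ne hle hne
  have hnlt : ¬ps < x ⊔ ps := fun h => hps.2 h hlt
  have heq : ps = x ⊔ ps := (le_sup_right.lt_or_eq).resolve_left hnlt
  calc x ≤ x ⊔ ps := le_sup_left
    _ = ps := heq.symm

end Helpers

lemma cover_unique {L : Type*} [Lattice L]
    {p a b : L} (hp : SupIrred p) (ha : a ⋖ p) (hb : b ⋖ p) : a = b :=
  le_antisymm (cover_le_of_lt hp hb ha.lt) (cover_le_of_lt hp ha hb.lt)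

/-- Let `L` be a modular lattice of finite length with projectivity classes of
coverings `P₁, …, P_s`, and let `θᵢ` be the (co-atom) congruence whose covering set
is the set of all coverings not in `Pᵢ`. Then the canonical epimorphism
`φᵢ : L → L/θᵢ` (formalized: any surjective lattice homomorphism with kernel `θᵢ`)
maps `J(Pᵢ) = {p ∈ J(L) : (p_*, p) ∈ Pᵢ}` bijectively onto `J(L/θᵢ)`; consequently
`j(L) = j(L/θ₁) + ⋯ + j(L/θ_s)`, i.e. `J(L)` is (cardinality-wise) the sum over all
projectivity classes `c` of the join-irreducibles belonging to `c`. -/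
theorem joinIrreducibles_bijection_and_sum
    {L : Type*} [Lattice L] [BoundedOrder L] [IsModularLattice L]
    (hFL : ∃ N : ℕ, ∀ c : LTSeries L, c.length ≤ N) :
    (∀ P : Set (L × L),
      (∃ x : L × L, x.1 ⋖ x.2 ∧ P = {y : L × L | y.1 ⋖ y.2 ∧ ProjInt x y}) →
      ∀ θ : Set (L × L), IsLatticeCon θ →
        {pq : L × L | pq.1 ⋖ pq.2 ∧ pq ∈ θ} = {pq : L × L | pq.1 ⋖ pq.2} \ P →
        ∀ (K : Type) [Lattice K] (f : L → K), IsLatHom f → Function.Surjective f →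
          (∀ a b : L, f a = f b ↔ (a, b) ∈ θ) →
          Set.BijOn f {p : L | SupIrred p ∧ ∃ ps : L, ps ⋖ p ∧ (ps, p) ∈ P}
            {q : K | SupIrred q}) ∧
    Cardinal.mk {p : L // SupIrred p} =
      Cardinal.sum (fun c : Quot (ProjInt (L := L)) =>
        Cardinal.mk {p : L // SupIrred p ∧
          ∃ ps : L, ps ⋖ p ∧ Quot.mk ProjInt (ps, p) = c}) := by
  constructor
  · rintro P - θ ⟨⟨hrefl, hsymm, htrans⟩, hcompat⟩ hcov K _ f hf hsurj hker
    -- coverings in P are not in θ, and coverings not in θ are in P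
    have hPnotθ : ∀ a b : L, a ⋖ b → (a, b) ∈ P → (a, b) ∉ θ := by
      intro a b hab hP hmem
      have h1 : (a, b) ∈ {pq : L × L | pq.1 ⋖ pq.2 ∧ pq ∈ θ} := ⟨hab, hmem⟩
      rw [hcov] at h1
      exact h1.2 hP
    have hnotθP : ∀ a b : L, a ⋖ b → (a, b) ∉ θ → (a, b) ∈ P := by
      intro a b hab hmem
      by_contra hP
      have h1 : (a, b) ∈ {pq : L × L | pq.1 ⋖ pq.2} \ P := ⟨hab, hP⟩
      rw [← hcov] at h1
      exact hmem h1.2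
    have hmono : ∀ a b : L, a ≤ b → f a ≤ f b := by
      intro a b hab
      have h1 := (hf a b).1
      rw [sup_eq_right.2 hab] at h1
      rw [h1]
      exact le_sup_left
    -- key reduction lemma
    have hkey : ∀ p ps : L, SupIrred p → ps ⋖ p → (ps, p) ∈ P →
        ∀ c : L, c ≤ p → (c, p) ∈ θ → c = p := by
      intro p ps hp hps hP c hcle hcθ
      by_contra hne
      have hclt : c < p := lt_of_le_of_ne hcle hne
      have hcps : c ≤ ps := cover_le_of_lt hp hps hclt
      have h2 : (c ⊔ ps, p ⊔ ps) ∈ θ := (hcompat c p ps ps hcθ (hrefl ps)).1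
      rw [sup_eq_right.2 hcps, sup_eq_left.2 hps.lt.le] at h2
      exact hPnotθ ps p hps hP h2
    refine ⟨?_, ?_, ?_⟩
    · -- MapsTo
      rintro p ⟨hp, ps, hps, hpsP⟩
      have hpsθ : (ps, p) ∉ θ := hPnotθ ps p hps hpsP
      constructor
      · -- ¬ IsMin (f p)
        intro hmin
        have hle : f ps ≤ f p := hmono ps p hps.lt.le
        have : f p ≤ f ps := hmin hle
        exact hpsθ ((hker ps p).1 (le_antisymm hle this))
      · intro u v huv
        obtain ⟨a0, ha0⟩ := hsurj u
        obtain ⟨b0, hb0⟩ := hsurj v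
        set a := a0 ⊓ p with ha
        set b := b0 ⊓ p with hb
        have hfa : f a = u := by
          rw [ha, (hf a0 p).2, ha0]
          exact inf_eq_left.2 (huv ▸ le_sup_left)
        have hfb : f b = v := by
          rw [hb, (hf b0 p).2, hb0]
          exact inf_eq_left.2 (huv ▸ le_sup_right)
        have hab : a ⊔ b ≤ p := sup_le inf_le_right inf_le_right
        have habθ : (a ⊔ b, p) ∈ θ := by
          apply (hker (a ⊔ b) p).1
          rw [(hf a b).1, hfa, hfb, huv]
        have heq : a ⊔ b = p := hkey p ps hp hps hpsP (a ⊔ b) hab habθ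
        rcases hp.2 heq with h | h
        · left; rw [← hfa, h]
        · right; rw [← hfb, h]
    · -- InjOn
      rintro p ⟨hp, ps, hps, hpsP⟩ p' ⟨hp', ps', hps', hpsP'⟩ hfpp
      have hθpp : (p, p') ∈ θ := (hker p p').1 hfpp
      have h1 : (p ⊓ p', p' ⊓ p') ∈ θ := (hcompat p p' p' p' hθpp (hrefl p')).2
      rw [inf_idem] at h1
      have hle1 : p' ≤ p := by
        have := hkey p' ps' hp' hps' hpsP' (p ⊓ p') inf_le_right h1
        rw [← this]; exact inf_le_left
      have h2 : (p' ⊓ p, p ⊓ p) ∈ θ := (hcompat p' p p p (hsymm hθpp) (hrefl p)).2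
      rw [inf_idem] at h2
      have hle2 : p ≤ p' := by
        have := hkey p ps hp hps hpsP (p' ⊓ p) inf_le_right h2
        rw [← this]; exact inf_le_left
      exact le_antisymm hle2 hle1
    · -- SurjOn
      rintro q hq
      obtain ⟨a0, ha0⟩ := hsurj q
      have hSne : ({x : L | f x = q}).Nonempty := ⟨a0, ha0⟩
      obtain ⟨p, hpS, hpmin⟩ := exists_minimal_mem hFL hSne
      have hp : SupIrred p := by
        constructor
        · intro hmin
          apply hq.1
          intro b hbq
          obtain ⟨a', ha'⟩ := hsurj b
          have hfb : f (a' ⊓ p) = b := by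
            rw [(hf a' p).2, ha', hpS]
            exact inf_eq_left.2 hbq
          have : a' ⊓ p = p := le_antisymm inf_le_right (hmin inf_le_right)
          rw [this, hpS] at hfb
          rw [← hfb]
        · intro b c hbc
          have hbq : f b = q ∨ f c = q := by
            apply hq.2
            rw [← (hf b c).1, hbc]
            exact hpS
          rcases hbq with h | h
          · left
            exact ((le_sup_left.trans hbc.le).lt_or_eq).resolve_left (hpmin b h)
          · right
            exact ((le_sup_right.trans hbc.le).lt_or_eq).resolve_left (hpmin c h)
      obtain ⟨ps, hps⟩ := exists_cover_of_not_isMin hFL hp.1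
      have hpsθ : (ps, p) ∉ θ := by
        intro hmem
        have : f ps = q := by rw [(hker ps p).2 hmem, hpS]
        exact hpmin ps this hps.lt
      exact ⟨p, ⟨hp, ps, hps, hnotθP ps p hps hpsθ⟩, hpS⟩
  · have huniq : ∀ p a b : L, SupIrred p → a ⋖ p → b ⋖ p → a = b :=
      fun p a b hp ha hb =>
        le_antisymm (cover_le_of_lt hp hb ha.lt) (cover_le_of_lt hp ha hb.lt)
    have e : {p : L // SupIrred p} ≃ (Σ c : Quot (ProjInt (L := L)),
        {p : L // SupIrred p ∧ ∃ ps : L, ps ⋖ p ∧ Quot.mk ProjInt (ps, p) = c}) := by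
      refine Equiv.symm (Equiv.ofBijective
        (fun x => (⟨x.2.1, x.2.2.1⟩ : {p : L // SupIrred p})) ⟨?_, ?_⟩)
      · rintro ⟨c, p, hp, ps, hps, hc⟩ ⟨c', p', hp', ps', hps', hc'⟩ h
        simp only [Subtype.mk.injEq] at h
        subst h
        have hpe : ps = ps' := huniq p ps ps' hp hps hps'
        subst hpe
        subst hc
        subst hc'
        rfl
      · rintro ⟨p, hp⟩
        obtain ⟨ps, hps⟩ := exists_cover_of_not_isMin hFL hp.1
        exact ⟨⟨Quot.mk _ (ps, p), ⟨p, hp, ps, hps, rfl⟩⟩, rfl⟩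
    rw [Cardinal.mk_congr e, Cardinal.mk_sigma]
end

section
/- In a modular lattice L of finite length, a join-irreducible p is projectively isolated (i.e. no join-irreducible q ≠ p satisfies (q_*, q) ≈ (p_*, p)) if and only if p is join-prime. -/
section Aux

variable {L : Type*} [Lattice L]

/-- No strictly increasing sequence in a finite-length lattice. -/
lemma no_strict_mono_seq (hFL : ∃ N : ℕ, ∀ c : LTSeries L, c.length ≤ N)
    (f : ℕ → L) (hf : ∀ n, f n < f (n + 1)) : False := by
  obtain ⟨N, hN⟩ := hFL
  have hmono : StrictMono f := strictMono_nat_of_lt_succ hf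
  let c : LTSeries L := ⟨N + 1, fun i => f i, by
    intro i
    exact hf i⟩
  have := hN c
  simp [c] at this

lemma exists_maximal_in (hFL : ∃ N : ℕ, ∀ c : LTSeries L, c.length ≤ N)
    (S : Set L) {x : L} (hx : x ∈ S) :
    ∃ m ∈ S, x ≤ m ∧ ∀ y ∈ S, ¬ m < y := by
  by_contra h
  push_neg at h
  -- every element of S above x has a strictly bigger element of S above x
  have key : ∀ m : L, m ∈ S → x ≤ m → ∃ y, y ∈ S ∧ x ≤ y ∧ m < y := by
    intro m hm hxm
    obtain ⟨y, hy, hlt⟩ := h m hm hxm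
    exact ⟨y, hy, le_trans hxm hlt.le, hlt⟩
  let f : ℕ → {m : L // m ∈ S ∧ x ≤ m} := fun n =>
    Nat.rec ⟨x, hx, le_rfl⟩
      (fun _ prev =>
        ⟨(key prev.1 prev.2.1 prev.2.2).choose,
          (key prev.1 prev.2.1 prev.2.2).choose_spec.1,
          (key prev.1 prev.2.1 prev.2.2).choose_spec.2.1⟩) n
  have hstep : ∀ n, (f n).1 < (f (n + 1)).1 := by
    intro n
    exact (key (f n).1 (f n).2.1 (f n).2.2).choose_spec.2.2
  exact no_strict_mono_seq hFL (fun n => (f n).1) hstep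

lemma exists_minimal_in (hFL : ∃ N : ℕ, ∀ c : LTSeries L, c.length ≤ N)
    (S : Set L) {x : L} (hx : x ∈ S) :
    ∃ m ∈ S, m ≤ x ∧ ∀ y ∈ S, ¬ y < m := by
  have hFL' : ∃ N : ℕ, ∀ c : LTSeries Lᵒᵈ, c.length ≤ N := by
    obtain ⟨N, hN⟩ := hFL
    exact ⟨N, fun c => by simpa using hN c.reverse⟩
  obtain ⟨m, hm, hxm, hmax⟩ :=
    exists_maximal_in (L := Lᵒᵈ) hFL' S (x := OrderDual.toDual x) hx
  exact ⟨m, hm, hxm, fun y hy => hmax y hy⟩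

/-- If `p < q`, there is `r` with `p ≤ r ⋖ q`. -/
lemma exists_covBy_between (hFL : ∃ N : ℕ, ∀ c : LTSeries L, c.length ≤ N)
    {p q : L} (h : p < q) : ∃ r, p ≤ r ∧ r ⋖ q := by
  obtain ⟨m, hm, hpm, hmax⟩ :=
    exists_maximal_in hFL {r | p ≤ r ∧ r < q} ⟨le_rfl, h⟩
  refine ⟨m, hm.1, hm.2, fun z hz hzq => ?_⟩
  exact hmax z ⟨le_trans hm.1 hz.le, hzq⟩ hz

lemma transp_pres {p a b c d : L} (hp : SupPrime p)
    (h : UpperTranspose a b c d) :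
    (p ≤ b ∧ ¬ p ≤ a) ↔ (p ≤ d ∧ ¬ p ≤ c) := by
  obtain ⟨ha, hd⟩ := h
  constructor
  · rintro ⟨hpb, hpa⟩
    refine ⟨le_trans hpb (hd ▸ le_sup_left), fun hpc => hpa ?_⟩
    rw [ha]; exact le_inf hpb hpc
  · rintro ⟨hpd, hpc⟩
    have := hp.2 (hd ▸ hpd)
    rcases this with hpb | h'
    · exact ⟨hpb, fun hpa => hpc (le_trans hpa (ha ▸ inf_le_right))⟩
    · exact absurd h' hpc

lemma projInt_pres {p : L} (hp : SupPrime p) {u v : L × L} (h : ProjInt u v) :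
    (p ≤ u.2 ∧ ¬ p ≤ u.1) ↔ (p ≤ v.2 ∧ ¬ p ≤ v.1) := by
  induction h with
  | rel x y hxy =>
    rcases hxy.2.2 with h' | h'
    · exact transp_pres hp h'
    · exact (transp_pres hp h').symm
  | refl x => exact Iff.rfl
  | symm x y _ ih => exact ih.symm
  | trans x y z _ _ ih₁ ih₂ => exact ih₁.trans ih₂

end Aux

/-- In a modular lattice of finite length, a join-irreducible `p` (with unique
lower cover `p_*`) is projectively isolated — i.e. no join-irreducible `q ≠ p`
satisfies `(q_*, q) ≈ (p_*, p)` — if and only if `p` is join-prime. -/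
theorem projectively_isolated_iff_joinPrime
    {L : Type*} [Lattice L] [BoundedOrder L] [IsModularLattice L]
    (hFL : ∃ N : ℕ, ∀ c : LTSeries L, c.length ≤ N)
    (p pstar : L) (hp : SupIrred p)
    (hps : pstar ⋖ p) (hpsu : ∀ y : L, y ⋖ p → y = pstar) :
    (∀ q qstar : L, SupIrred q → qstar ⋖ q → (∀ y : L, y ⋖ q → y = qstar) →
        q ≠ p → ¬ ProjInt (qstar, q) (pstar, p))
    ↔ SupPrime p := by
  have hlt_pstar : ∀ r : L, r < p → r ≤ pstar := by
    intro r hr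
    obtain ⟨s, hrs, hsp⟩ := exists_covBy_between hFL hr
    exact hrs.trans (hpsu s hsp).le
  constructor
  · -- isolated → prime : contrapositive-style construction
    intro hiso
    refine ⟨hp.1, fun x y hxy => ?_⟩
    by_contra hcon
    push_neg at hcon
    obtain ⟨hpx, hpy⟩ := hcon
    -- first transpose: [pstar, p] ↗ [a, b]
    set a := x ⊔ pstar with ha_def
    set b := x ⊔ p with hb_def
    have hpa : p ⊓ a = pstar := by
      have h1 : (pstar ⊔ x) ⊓ p = pstar ⊔ x ⊓ p := sup_inf_assoc_of_le x hps.le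
      have h2 : x ⊓ p ≤ pstar := by
        apply hlt_pstar
        exact lt_of_le_of_ne inf_le_right (fun he => hpx (he ▸ inf_le_left))
      have : p ⊓ a = pstar ⊔ x ⊓ p := by
        rw [ha_def, inf_comm, sup_comm x pstar, h1]
      rw [this, sup_eq_left.2 h2]
    have hpab : ¬ p ≤ a := fun h => by
      have : p = pstar := by rw [← hpa, inf_eq_left.2 h]
      exact hps.ne' this
    have hab : a < b := by
      have hle : a ≤ b := sup_le_sup_left hps.le x
      refine lt_of_le_of_ne hle (fun he => hpab ?_)
      rw [he]; exact le_sup_right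
    have hpb : p ⊔ a = b := by
      rw [ha_def, hb_def, sup_comm x pstar, ← sup_assoc, sup_comm p pstar,
        sup_eq_right.2 hps.le, sup_comm]
    have hcov_ab : a ⋖ b := by
      have : p ⊓ a ⋖ p := hpa ▸ hps
      have h' := CovBy.sup_of_inf_left this
      rwa [hpb] at h'
    -- second transpose: [a₂, b₂] ↗ [a, b]
    set b₂ := y ⊓ b with hb₂_def
    set a₂ := a ⊓ b₂ with ha₂_def
    have hb_le : b ≤ a ⊔ y := by
      have : p ≤ a ⊔ y := hxy.trans (sup_le_sup_right le_sup_left y)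
      rw [hb_def]
      exact sup_le (le_trans le_sup_left le_sup_left) this
    have hsup₂ : a ⊔ b₂ = b := by
      have h1 : (a ⊔ y) ⊓ b = a ⊔ y ⊓ b := sup_inf_assoc_of_le y hab.le
      rw [hb₂_def, ← h1, inf_eq_right.2 hb_le]
    have ha₂b₂ : a₂ < b₂ := by
      refine lt_of_le_of_ne inf_le_right (fun he => ?_)
      have hb₂a : b₂ ≤ a := by rw [← he, ha₂_def]; exact inf_le_left
      have : a = b := by rw [← hsup₂, sup_eq_left.2 hb₂a]
      exact hab.ne this
    have hcov₂ : a₂ ⋖ b₂ := by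
      have h1 : a ⋖ a ⊔ b₂ := hsup₂ ▸ hcov_ab
      have h2 := CovBy.inf_of_sup_left h1
      rwa [← ha₂_def] at h2
    -- pick a minimal q ≤ b₂ with q ≰ a₂
    obtain ⟨q, hqS, -, hqmin⟩ := exists_minimal_in hFL {r | r ≤ b₂ ∧ ¬ r ≤ a₂}
      (x := b₂) ⟨le_rfl, fun h => absurd h ha₂b₂.not_ge⟩
    obtain ⟨hqb₂, hqa₂⟩ := hqS
    have hlt_q : ∀ r : L, r < q → r ≤ a₂ := by
      intro r hr
      by_contra hra
      exact hqmin r ⟨le_trans hr.le hqb₂, hra⟩ hr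
    set qstar := q ⊓ a₂ with hqstar_def
    have hqstar_lt : qstar < q :=
      lt_of_le_of_ne inf_le_left (fun he => hqa₂ (he ▸ inf_le_right))
    have hqcov : qstar ⋖ q := by
      refine ⟨hqstar_lt, fun z hz hzq => ?_⟩
      exact absurd (le_inf hzq.le (hlt_q z hzq)) hz.not_ge
    have hquniq : ∀ y' : L, y' ⋖ q → y' = qstar := by
      intro y' hy'
      have h1 : y' ≤ qstar := le_inf hy'.le (hlt_q y' hy'.lt)
      rcases lt_or_eq_of_le h1 with h2 | h2
      · exact absurd hqstar_lt (hy'.2 h2)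
      · exact h2
    have hqirr : SupIrred q := by
      constructor
      · intro hmin
        exact hqa₂ (le_trans (hmin bot_le) bot_le)
      · intro u v huv
        by_contra hne
        push_neg at hne
        have hu : u ≤ a₂ := hlt_q u (lt_of_le_of_ne (huv ▸ le_sup_left) hne.1)
        have hv : v ≤ a₂ := hlt_q v (lt_of_le_of_ne (huv ▸ le_sup_right) hne.2)
        exact hqa₂ (huv ▸ sup_le hu hv)
    have hqp : q ≠ p := by
      intro he
      exact hpy (he ▸ hqb₂.trans inf_le_left)
    -- build the projectivity chain
    have hqsup : q ⊔ a₂ = b₂ := by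
      have h1 : a₂ < a₂ ⊔ q := lt_of_le_of_ne le_sup_left
        (fun he => hqa₂ (he ▸ le_sup_right))
      have h2 : a₂ ⊔ q ≤ b₂ := sup_le ha₂b₂.le hqb₂
      have h3 : a₂ ⊔ q = b₂ := by
        rcases lt_or_eq_of_le h2 with h | h
        · exact absurd h (hcov₂.2 h1)
        · exact h
      rw [sup_comm] at h3; exact h3
    have T1 : TranspInt (qstar, q) (a₂, b₂) :=
      ⟨hqstar_lt, ha₂b₂, Or.inl ⟨hqstar_def, hqsup.symm⟩⟩
    have T2 : TranspInt (a₂, b₂) (a, b) :=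
      ⟨ha₂b₂, hab, Or.inl ⟨by rw [ha₂_def, inf_comm], by rw [← hsup₂, sup_comm]⟩⟩
    have T3 : TranspInt (a, b) (pstar, p) :=
      ⟨hab, hps.lt, Or.inr ⟨hpa.symm, by rw [← hpb, sup_comm]⟩⟩
    exact hiso q qstar hqirr hqcov hquniq hqp
      (Relation.EqvGen.trans _ _ _ (Relation.EqvGen.rel _ _ T1)
        (Relation.EqvGen.trans _ _ _ (Relation.EqvGen.rel _ _ T2)
          (Relation.EqvGen.rel _ _ T3)))
  · -- prime → isolated
    intro hprime q qstar _ hqcov hquniq hqp hproj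
    have hinv := (projInt_pres hprime hproj).2 ⟨le_rfl, hps.lt.not_ge⟩
    obtain ⟨hpq, hpqs⟩ := hinv
    have hplt : p < q := lt_of_le_of_ne hpq (Ne.symm hqp)
    obtain ⟨r, hpr, hrq⟩ := exists_covBy_between hFL hplt
    exact hpqs (hpr.trans (hquniq r hrq).le)
end

section
/- A semimodular lattice L of finite length is sectionally complemented (every interval [a,b] of L is a complemented lattice) if and only if L is atomistic (every element is a join of atoms). -/
section Aux

variable {L : Type*} [Lattice L] [BoundedOrder L]

lemma wf_lt_of_bddSeries {N : ℕ} (h : ∀ c : LTSeries L, c.length ≤ N) :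
    WellFounded ((· < ·) : L → L → Prop) := by
  rw [RelEmbedding.wellFounded_iff_isEmpty]
  constructor
  intro f
  have hmono : StrictMono (fun i : Fin (N + 2) => f.toEmbedding (N + 1 - (i : ℕ))) := by
    intro i j hij
    apply f.map_rel_iff.2
    have hj : (j : ℕ) ≤ N + 1 := Nat.lt_succ_iff.1 j.2
    exact Nat.sub_lt_sub_left (lt_of_lt_of_le hij hj) hij
  have := h (LTSeries.mk (N + 1) _ hmono)
  simp [LTSeries.mk] at this

lemma wf_gt_of_bddSeries {N : ℕ} (h : ∀ c : LTSeries L, c.length ≤ N) :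
    WellFounded ((· > ·) : L → L → Prop) := by
  rw [RelEmbedding.wellFounded_iff_isEmpty]
  constructor
  intro f
  have hmono : StrictMono (fun i : Fin (N + 2) => f.toEmbedding (i : ℕ)) := by
    intro i j hij
    exact f.map_rel_iff.2 hij
  have := h (LTSeries.mk (N + 1) _ hmono)
  simp [LTSeries.mk] at this

end Aux

/-- A semimodular lattice of finite length is sectionally complemented (every
interval is complemented) if and only if it is atomistic (every element is a
join of atoms). -/
theorem semimodular_sectionally_complemented_iff_atomistic
    {L : Type*} [Lattice L] [BoundedOrder L]
    (hFL : ∃ N : ℕ, ∀ c : LTSeries L, c.length ≤ N)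
    (hsemi : ∀ a b c d : L, a ⋖ b → a = b ⊓ c → d = b ⊔ c → c ⋖ d) :
    (∀ a b : L, a ≤ b → ∀ x : L, a ≤ x → x ≤ b →
        ∃ y : L, a ≤ y ∧ y ≤ b ∧ x ⊔ y = b ∧ x ⊓ y = a)
    ↔ (∀ x : L, ∃ S : Finset L, (∀ a ∈ S, IsAtom a) ∧ x = S.sup id) := by
  classical
  obtain ⟨N, hN⟩ := hFL
  have hwflt := wf_lt_of_bddSeries hN
  have hwfgt := wf_gt_of_bddSeries hN
  constructor
  · -- sectionally complemented → atomistic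
    intro hcompl
    intro x
    induction x using hwflt.induction with
    | _ x ih =>
      by_cases hx : x = ⊥
      · exact ⟨∅, by simp, by simp [hx]⟩
      · -- find an atom below x
        obtain ⟨m, ⟨hm0, hmx⟩, hmin⟩ :=
          hwflt.has_min {y : L | y ≠ ⊥ ∧ y ≤ x} ⟨x, hx, le_rfl⟩
        have hatom : IsAtom m := by
          constructor
          · exact hm0
          · intro z hz
            by_contra hz0
            exact hmin z ⟨hz0, hz.le.trans hmx⟩ hz
        obtain ⟨y, -, hyx, hsup, hinf⟩ :=
          hcompl ⊥ x bot_le m bot_le hmx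
        have hylt : y < x := by
          rcases lt_or_eq_of_le hyx with h | h
          · exact h
          · exfalso
            apply hm0
            have : m ≤ y := h ▸ hmx
            simpa [inf_eq_left.2 this] using hinf
        obtain ⟨S, hS, hSsup⟩ := ih y hylt
        refine ⟨insert m S, ?_, ?_⟩
        · intro a ha
          rcases Finset.mem_insert.1 ha with h | h
          · exact h ▸ hatom
          · exact hS a h
        · rw [Finset.sup_insert, ← hSsup, ← hsup]
          rfl
  · -- atomistic → sectionally complemented
    intro hatomistic
    intro a b hab x hax hxb
    obtain ⟨y, ⟨hay, hyb, hinf⟩, hmax⟩ :=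
      hwfgt.has_min {y : L | a ≤ y ∧ y ≤ b ∧ x ⊓ y = a}
        ⟨a, le_rfl, hab, inf_eq_right.2 hax⟩
    refine ⟨y, hay, hyb, ?_, hinf⟩
    by_contra hne
    have hxyb : x ⊔ y < b := lt_of_le_of_ne (sup_le hxb hyb) hne
    obtain ⟨S, hS, hSsup⟩ := hatomistic b
    have hp : ∃ p ∈ S, ¬ p ≤ x ⊔ y := by
      by_contra h
      push_neg at h
      exact absurd (hSsup ▸ Finset.sup_le h : b ≤ x ⊔ y) (not_le_of_gt hxyb)
    obtain ⟨p, hpS, hpn⟩ := hp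
    have hpatom : IsAtom p := hS p hpS
    have hpb : p ≤ b := hSsup ▸ Finset.le_sup (f := id) hpS
    have hpy : p ⊓ y = ⊥ := by
      rcases lt_or_eq_of_le (inf_le_left : p ⊓ y ≤ p) with h | h
      · exact hpatom.2 _ h
      · exact absurd ((inf_eq_left.1 h).trans le_sup_right) hpn
    have hcov : y ⋖ y ⊔ p :=
      hsemi ⊥ p y (y ⊔ p) hpatom.bot_covBy hpy.symm (sup_comm y p)
    set y' := y ⊔ p with hy'
    have hy'b : y' ≤ b := sup_le hyb hpb
    have hxy' : x ⊓ y' = a := by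
      have hz : y ≤ (x ⊓ y') ⊔ y := le_sup_right
      have hz' : (x ⊓ y') ⊔ y ≤ y' := sup_le (inf_le_right) le_sup_left
      have hzy : (x ⊓ y') ⊔ y = y := by
        rcases lt_or_eq_of_le hz with h | h
        · rcases lt_or_eq_of_le hz' with h2 | h2
          · exact absurd h2 (hcov.2 h)
          · exfalso
            apply hpn
            have : y' ≤ x ⊔ y := h2 ▸ sup_le (inf_le_left.trans le_sup_left) le_sup_right
            exact le_sup_right.trans this
        · exact h.symm
      have : x ⊓ y' ≤ y := le_sup_left.trans hzy.le
      have h2 : x ⊓ y' ≤ a := hinf ▸ le_inf inf_le_left this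
      exact le_antisymm h2 (le_inf hax (hay.trans le_sup_left))
    exact hmax y' ⟨hay.trans le_sup_left, hy'b, hxy'⟩ (lt_of_lt_of_le hcov.1 le_rfl)
end

section
/- Let L be a modular geometric lattice of finite length. Two distinct atoms p, q of L are perspective if and only if there is a third atom r, distinct from p and q, with p ∨ r = q ∨ r = p ∨ q (so that {0, p, q, r, p ∨ q} is a covering sublattice of L isomorphic to M₃). -/
/-- Distinct atoms meet at bottom. -/
lemma atom_inf_eq_bot_aux {L : Type*} [Lattice L] [OrderBot L] {p r : L}
    (hp : IsAtom p) (hr : IsAtom r) (h : r ≠ p) : p ⊓ r = ⊥ := by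
  rcases hr.le_iff.mp (inf_le_right : p ⊓ r ≤ r) with h1 | h1
  · exact h1
  · exfalso
    have hrp : r ≤ p := h1 ▸ inf_le_left
    rcases hp.le_iff.mp hrp with h2 | h2
    · exact hr.1 h2
    · exact h h2

/-- Let `L` be a modular geometric lattice of finite length (modular and
atomistic; modularity makes it semimodular). Two distinct atoms `p, q` are
perspective — i.e. `[0,p]` and `[0,q]` have a common upper transpose `[e,f]` —
iff there is a third atom `r` with `p ⊔ r = q ⊔ r = p ⊔ q` (so that
`{0, p, q, r, p ⊔ q}` is a covering `M₃`-sublattice). -/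
theorem modular_geometric_perspective_iff_M3
    {L : Type*} [Lattice L] [BoundedOrder L] [IsModularLattice L]
    (hFL : ∃ N : ℕ, ∀ c : LTSeries L, c.length ≤ N)
    (hatom : ∀ x : L, ∃ S : Finset L, (∀ a ∈ S, IsAtom a) ∧ x = S.sup id)
    (p q : L) (hp : IsAtom p) (hq : IsAtom q) (hpq : p ≠ q) :
    (∃ e f : L, p ⊓ e = ⊥ ∧ p ⊔ e = f ∧ q ⊓ e = ⊥ ∧ q ⊔ e = f)
    ↔ ∃ r : L, IsAtom r ∧ r ≠ p ∧ r ≠ q ∧ p ⊔ r = p ⊔ q ∧ q ⊔ r = p ⊔ q := by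
  constructor
  · rintro ⟨e, f, hpe, hpef, hqe, hqef⟩
    set r : L := e ⊓ (p ⊔ q) with hrdef
    have hqf : p ⊔ q ≤ f := sup_le (hpef ▸ le_sup_left) (hqef ▸ le_sup_left)
    have hre : r ≤ e := inf_le_left
    have hrpq : r ≤ p ⊔ q := inf_le_right
    -- p ⊔ r = p ⊔ q by modularity
    have hpr : p ⊔ r = p ⊔ q := by
      rw [hrdef, ← sup_inf_assoc_of_le e (le_sup_left : p ≤ p ⊔ q), hpef]
      exact inf_eq_right.mpr hqf
    have hqr : q ⊔ r = p ⊔ q := by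
      rw [hrdef, ← sup_inf_assoc_of_le e (le_sup_right : q ≤ p ⊔ q), hqef]
      exact inf_eq_right.mpr hqf
    have hpir : p ⊓ r = ⊥ := le_bot_iff.mp (hpe ▸ inf_le_inf_left p hre)
    have hqir : q ⊓ r = ⊥ := le_bot_iff.mp (hqe ▸ inf_le_inf_left q hre)
    have hrne : r ≠ ⊥ := by
      intro h
      have : p ⊔ q = p := by rw [← hpr, h, sup_bot_eq]
      have hqp : q ≤ p := this ▸ le_sup_right
      rcases hp.le_iff.mp hqp with h2 | h2
      · exact hq.1 h2
      · exact hpq h2.symm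
    have hratom : IsAtom r := by
      refine ⟨hrne, fun x hx => ?_⟩
      by_contra hxne
      rcases hq.le_iff.mp (inf_le_left : q ⊓ (p ⊔ x) ≤ q) with h1 | h1
      · -- q ⊓ (p ⊔ x) = ⊥ : then x ≤ p, so x = ⊥
        have hle : p ⊔ x ≤ p ⊔ q := sup_le le_sup_left (hx.le.trans hrpq)
        have : p ⊔ q ⊓ (p ⊔ x) = (p ⊔ q) ⊓ (p ⊔ x) :=
          (sup_inf_assoc_of_le q (le_sup_left : p ≤ p ⊔ x)).symm
        rw [h1, sup_bot_eq, inf_eq_right.mpr hle] at this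
        have hxp : x ≤ p := by rw [this]; exact le_sup_right
        exact hxne (le_bot_iff.mp (hpir ▸ le_inf hxp hx.le))
      · -- q ≤ p ⊔ x : then r ≤ p ⊔ x and x = r, contradiction
        have hrle : r ≤ p ⊔ x := hrpq.trans (sup_le le_sup_left (h1 ▸ inf_le_right))
        have : (x ⊔ p) ⊓ r = x ⊔ p ⊓ r := sup_inf_assoc_of_le p hx.le
        rw [hpir, sup_bot_eq, sup_comm, inf_eq_right.mpr hrle] at this
        exact absurd this hx.ne'
    refine ⟨r, hratom, ?_, ?_, hpr, hqr⟩
    · intro h; apply hp.1; rw [← hpir, h, inf_idem]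
    · intro h; apply hq.1; rw [← hqir, h, inf_idem]
  · rintro ⟨r, hr, hrp, hrq, h1, h2⟩
    exact ⟨r, p ⊔ q, atom_inf_eq_bot_aux hp hr hrp, h1,
      atom_inf_eq_bot_aux hq hr hrq, h2⟩
end

section
/- Let B = (E, Λ) be a partial linear space with E finite and Λ = {ℓ₁, …, ℓ_t}. Then all acyclifiers of B have the same cardinality, namely r*(B) = c(B) + (|ℓ₁| + ⋯ + |ℓ_t|) − |E| − t, where c(B) is the number of connected components of B. -/
/-- A point-line incidence structure: a set `E` of points and a set of lines,
each line being a set of points. -/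
structure PrePLS (P : Type*) where
  E : Set P
  lines : Set (Set P)

/-- `B` is a partial linear space: lines consist of points of `E`, every line has
at least two points, and two distinct lines meet in at most one point (equivalently,
two distinct points lie on at most one common line). -/
def IsPLS {P : Type*} (B : PrePLS P) : Prop :=
  (∀ ℓ ∈ B.lines, ℓ ⊆ B.E) ∧
  (∀ ℓ ∈ B.lines, ∃ p ∈ ℓ, ∃ q ∈ ℓ, p ≠ q) ∧
  (∀ ℓ₁ ∈ B.lines, ∀ ℓ₂ ∈ B.lines, ℓ₁ ≠ ℓ₂ → (ℓ₁ ∩ ℓ₂).Subsingleton)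

/-- Connectivity of points: the reflexive-transitive closure of lying on a
common line. -/
def PLSConn {P : Type*} (B : PrePLS P) : P → P → Prop :=
  Relation.ReflTransGen (fun p q => ∃ ℓ ∈ B.lines, p ∈ ℓ ∧ q ∈ ℓ)

/-- The number of connected components of `B` (isolated points count as
components). -/
noncomputable def numComponents {P : Type*} (B : PrePLS P) : ℕ :=
  Nat.card (Quot fun p q : B.E => PLSConn B p.val q.val)

/-- `B` has a cycle: `n ≥ 3` distinct lines `ℓ₀, …, ℓ_{n-1}` together with
pairwise distinct junction points `pᵢ ∈ ℓᵢ ∩ ℓᵢ₊₁` (indices mod `n`). -/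
def HasCycle {P : Type*} (B : PrePLS P) : Prop :=
  ∃ (n : ℕ) (hn : 3 ≤ n) (ℓ : Fin n → Set P) (p : Fin n → P),
    (∀ i, ℓ i ∈ B.lines) ∧ Function.Injective ℓ ∧ Function.Injective p ∧
    ∀ i : Fin n, p i ∈ ℓ i ∧
      p i ∈ ℓ ⟨(i.val + 1) % n, Nat.mod_lt _ (by omega)⟩

/-- Applying a set `X` of point-splittings `(ℓ, p)` to `B`: for each
`(ℓ, p) ∈ X`, the point `p` is removed from the line `ℓ` and replaced on `ℓ` by a
new point (modelled as `Sum.inr (ℓ, p)`) belonging to no other line; the point set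
consists of the old points together with the new ones. -/
def splitPLS {P : Type*} (B : PrePLS P) (X : Set (Set P × P)) :
    PrePLS (P ⊕ (Set P × P)) where
  E := (Sum.inl '' B.E) ∪ (Sum.inr '' X)
  lines := {ℓ' : Set (P ⊕ (Set P × P)) | ∃ ℓ ∈ B.lines,
    ℓ' = (Sum.inl '' {p ∈ ℓ | (ℓ, p) ∉ X}) ∪ (Sum.inr '' {x ∈ X | x.1 = ℓ})}

/-- `A` is an acyclifier of `B`: a set of point-splittings whose application
yields an acyclic PLS with the same number of connected components as `B`. -/
def IsAcyclifier {P : Type*} (B : PrePLS P) (A : Set (Set P × P)) : Prop :=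
  (∀ x ∈ A, x.1 ∈ B.lines ∧ x.2 ∈ x.1) ∧
  ¬ HasCycle (splitPLS B A) ∧
  numComponents (splitPLS B A) = numComponents B


section Aux
variable {P : Type*}

lemma plsConn_symm (B : PrePLS P) : Symmetric (PLSConn B) :=
  fun _ _ h => by
    induction h with
    | refl => exact .refl
    | tail _ hs ih =>
      obtain ⟨ℓ, hℓ, hp, hq⟩ := hs
      exact Relation.ReflTransGen.head ⟨ℓ, hℓ, hq, hp⟩ ih

lemma plsConn_equiv (B : PrePLS P) :
    Equivalence (fun p q : B.E => PLSConn B p.val q.val) :=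
  ⟨fun _ => .refl, fun h => plsConn_symm B h, fun h h' => .trans h h'⟩

/-- A chain of lines avoiding `ℓ₀`. -/
def ChainOK (B : PrePLS P) (ℓ₀ : Set P) (x : ℕ → P) (L : ℕ → Set P) (m : ℕ) : Prop :=
  ∀ k < m, L k ∈ B.lines ∧ L k ≠ ℓ₀ ∧ x k ∈ L k ∧ x (k+1) ∈ L k

lemma chainOK_mono {B : PrePLS P} {ℓ₀ x L m} (h : ChainOK B ℓ₀ x L m) {m' : ℕ}
    (hm : m' ≤ m) : ChainOK B ℓ₀ x L m' := fun k hk => h k (lt_of_lt_of_le hk hm)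

/-- Splice out a repeated point. -/
lemma chainOK_splice_point {B : PrePLS P} {ℓ₀ x L m} (h : ChainOK B ℓ₀ x L m)
    {i d : ℕ} (hid : i + d ≤ m) (hx : x i = x (i + d)) :
    ChainOK B ℓ₀ (fun k => if k ≤ i then x k else x (k + d))
      (fun k => if k < i then L k else L (k + d)) (m - d) := by
  intro k hk
  rcases lt_or_ge k i with hki | hki
  · have := h k (by omega)
    simp only [if_pos hki, if_pos (by omega : k ≤ i), if_pos (by omega : k + 1 ≤ i)]
    exact this
  · have hkd := h (k + d) (by omega)
    simp only [if_neg (by omega : ¬ k < i), if_neg (by omega : ¬ k + 1 ≤ i)]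
    obtain ⟨a1, a2, a3, a4⟩ := hkd
    have a4' : x (k + 1 + d) ∈ L (k + d) := by rwa [show k + 1 + d = k + d + 1 by omega]
    rcases eq_or_lt_of_le hki with rfl | hki'
    · exact ⟨a1, a2, by simpa only [if_pos le_rfl, hx] using a3, a4'⟩
    · exact ⟨a1, a2, by simpa only [if_neg (by omega : ¬ k ≤ i)] using a3, a4'⟩

/-- Splice out a repeated line. -/
lemma chainOK_splice_line {B : PrePLS P} {ℓ₀ x L m} (h : ChainOK B ℓ₀ x L m)
    {i d : ℕ} (hd : 1 ≤ d) (hid : i + d < m) (hL : L i = L (i + d)) :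
    ChainOK B ℓ₀ (fun k => if k ≤ i then x k else x (k + d))
      (fun k => if k ≤ i then L k else L (k + d)) (m - d) := by
  intro k hk
  rcases lt_or_ge k i with hki | hki
  · have := h k (by omega)
    simp only [if_pos (le_of_lt hki), if_pos (by omega : k ≤ i), if_pos (by omega : k + 1 ≤ i)]
    exact this
  · rcases eq_or_lt_of_le hki with rfl | hki'
    · have h1 := h i (by omega)
      have h2 := h (i + d) (by omega)
      simp only [if_pos le_rfl, if_neg (by omega : ¬ i + 1 ≤ i)]
      exact ⟨h1.1, h1.2.1, h1.2.2.1,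
        by rw [hL, show i + 1 + d = i + d + 1 by omega] at *; exact h2.2.2.2⟩
    · obtain ⟨a1, a2, a3, a4⟩ := h (k + d) (by omega)
      simp only [if_neg (by omega : ¬ k ≤ i), if_neg (by omega : ¬ k + 1 ≤ i)]
      exact ⟨a1, a2, a3, by rwa [show k + 1 + d = k + d + 1 by omega]⟩

lemma conn_to_chain (B : PrePLS P) (ℓ₀ : Set P) {p q : P}
    (h : PLSConn ⟨B.E, B.lines \ {ℓ₀}⟩ p q) :
    ∃ m x L, x 0 = p ∧ x m = q ∧ ChainOK B ℓ₀ x L m := by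
  induction h with
  | refl => exact ⟨0, fun _ => p, fun _ => ∅, rfl, rfl, fun k hk => absurd hk (by omega)⟩
  | @tail b c _ hstep ih =>
    obtain ⟨m, x, L, hx0, hxm, hch⟩ := ih
    obtain ⟨ℓ, hℓ, hb, hc⟩ := hstep
    refine ⟨m + 1, fun k => if k ≤ m then x k else c, fun k => if k < m then L k else ℓ,
      ?_, ?_, ?_⟩
    · simpa using hx0
    · simp
    · intro k hk
      rcases lt_or_ge k m with hkm | hkm
      · have := hch k hkm
        simp only [if_pos hkm, if_pos (le_of_lt hkm), if_pos (by omega : k + 1 ≤ m)]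
        exact this
      · have hk' : k = m := by omega
        simp only [hk', if_neg (lt_irrefl m), if_pos le_rfl, if_neg (by omega : ¬ m + 1 ≤ m)]
        exact ⟨hℓ.1, fun hh => hℓ.2 (by simp [hh]), by rwa [hxm], hc⟩

end Aux

section Big
variable {P : Type*}

lemma no_conn_avoiding (B : PrePLS P)
    (hsub : ∀ ℓ₁ ∈ B.lines, ∀ ℓ₂ ∈ B.lines, ℓ₁ ≠ ℓ₂ → (ℓ₁ ∩ ℓ₂).Subsingleton)
    (hnc : ¬ HasCycle B) {ℓ₀ : Set P} (hℓ₀ : ℓ₀ ∈ B.lines) {p q : P}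
    (hp : p ∈ ℓ₀) (hq : q ∈ ℓ₀) (hpq : p ≠ q)
    (hconn : PLSConn ⟨B.E, B.lines \ {ℓ₀}⟩ p q) : False := by
  classical
  set Pred : ℕ → Prop :=
    fun m => ∃ x L, x 0 ∈ ℓ₀ ∧ x m ∈ ℓ₀ ∧ x 0 ≠ x m ∧ ChainOK B ℓ₀ x L m with hPred
  have hex : ∃ m, Pred m := by
    obtain ⟨m, x, L, hx0, hxm, hch⟩ := conn_to_chain B ℓ₀ hconn
    exact ⟨m, x, L, hx0 ▸ hp, hxm ▸ hq, by rw [hx0, hxm]; exact hpq, hch⟩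
  set m₀ := Nat.find hex with hm₀def
  obtain ⟨x, L, hx0, hxm, hxne, hch⟩ := Nat.find_spec hex
  rw [← hm₀def] at hxm hxne hch
  have hmin : ∀ m' < m₀, ¬ Pred m' := fun m' h => Nat.find_min hex h
  have hm1 : 1 ≤ m₀ := by
    rcases Nat.eq_zero_or_pos m₀ with h | h
    · exact absurd rfl (h ▸ hxne)
    · exact h
  -- points pairwise distinct
  have hptd : ∀ i j, i < j → j ≤ m₀ → x i ≠ x j := by
    intro i j hij hjm hxeq
    by_cases hcase : i = 0 ∧ j = m₀
    · exact hxne (hcase.1 ▸ hcase.2 ▸ hxeq)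
    · set d := j - i with hd
      have hd1 : 1 ≤ d := by omega
      have hsp := chainOK_splice_point hch (by omega : i + d ≤ m₀)
        (by rw [show i + d = j by omega]; exact hxeq)
      apply hmin (m₀ - d) (by omega)
      refine ⟨_, _, ?_, ?_, ?_, hsp⟩
      · simpa using hx0
      · rcases lt_or_ge i (m₀ - d) with h' | h'
        · simpa only [if_neg (by omega : ¬ m₀ - d ≤ i), show m₀ - d + d = m₀ by omega] using hxm
        · have hieq : m₀ - d = i := by omega
          have hjm0 : j = m₀ := by omega
          simp only [hieq, if_pos le_rfl]
          rw [hxeq, hjm0]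
          exact hxm
      · rcases lt_or_ge i (m₀ - d) with h' | h'
        · simp only [if_pos (by omega : 0 ≤ i), if_neg (by omega : ¬ m₀ - d ≤ i),
            show m₀ - d + d = m₀ by omega]
          exact hxne
        · have hieq : m₀ - d = i := by omega
          simp only [if_pos (by omega : 0 ≤ i), hieq, if_pos le_rfl]
          rw [hxeq, show j = m₀ by omega]
          exact hxne
  -- interior points avoid ℓ₀
  have hint : ∀ i, 0 < i → i < m₀ → x i ∉ ℓ₀ := by
    intro i h0 him hmem
    exact hmin i him ⟨x, L, hx0, hmem, hptd 0 i h0 (le_of_lt him), chainOK_mono hch (le_of_lt him)⟩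
  -- lines pairwise distinct
  have hltd : ∀ i j, i < j → j < m₀ → L i ≠ L j := by
    intro i j hij hjm hLeq
    set d := j - i with hd
    have hsp := chainOK_splice_line hch (by omega : 1 ≤ d) (by omega : i + d < m₀)
      (by rw [show i + d = j by omega]; exact hLeq)
    apply hmin (m₀ - d) (by omega)
    refine ⟨_, _, ?_, ?_, ?_, hsp⟩
    · simpa using hx0
    · simpa only [if_neg (by omega : ¬ m₀ - d ≤ i), show m₀ - d + d = m₀ by omega] using hxm
    · simp only [if_pos (by omega : 0 ≤ i), if_neg (by omega : ¬ m₀ - d ≤ i),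
        show m₀ - d + d = m₀ by omega]
      exact hxne
  -- m₀ ≥ 2
  have hm2 : 2 ≤ m₀ := by
    rcases Nat.lt_or_ge m₀ 2 with h | h
    · exfalso
      have hm1' : m₀ = 1 := by omega
      obtain ⟨hL0, hL0ne, hx0L, hx1L⟩ := hch 0 (by omega)
      have := hsub ℓ₀ hℓ₀ (L 0) hL0 (Ne.symm hL0ne)
      have hxm1 : x 1 ∈ ℓ₀ := by rw [← hm1']; exact hxm
      have h01 : x 0 = x 1 := this ⟨hx0, hx0L⟩ ⟨hxm1, hx1L⟩
      exact hxne (by rw [hm1']; exact h01)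
    · exact h
  -- build the cycle
  apply hnc
  refine ⟨m₀ + 1, by omega,
    fun i => if i.val = 0 then ℓ₀ else L (i.val - 1), fun i => x i.val, ?_, ?_, ?_, ?_⟩
  · intro i
    by_cases h : i.val = 0
    · simpa [h] using hℓ₀
    · have := hch (i.val - 1) (by omega)
      simpa [h] using this.1
  · intro i j hij
    simp only at hij
    by_cases hi : i.val = 0 <;> by_cases hj : j.val = 0
    · exact Fin.ext (hi ▸ hj ▸ rfl)
    · exfalso
      rw [if_pos hi, if_neg hj] at hij
      exact (hch (j.val - 1) (by omega)).2.1 hij.symm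
    · exfalso
      rw [if_neg hi, if_pos hj] at hij
      exact (hch (i.val - 1) (by omega)).2.1 hij
    · rw [if_neg hi, if_neg hj] at hij
      have : i.val - 1 = j.val - 1 := by
        by_contra hne
        rcases Nat.lt_or_ge (i.val - 1) (j.val - 1) with h' | h'
        · exact hltd _ _ h' (by omega) hij
        · exact hltd _ _ (by omega) (by omega) hij.symm
      exact Fin.ext (by omega)
  · intro i j hij
    simp only at hij
    apply Fin.ext
    by_contra hne
    rcases Nat.lt_or_ge i.val j.val with h' | h'
    · exact hptd _ _ h' (by omega) hij
    · exact hptd _ _ (by omega) (by omega) hij.symm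
  · intro i
    constructor
    · by_cases h : i.val = 0
      · simp only [if_pos h, h]
        exact hx0
      · simp only [if_neg h]
        have := (hch (i.val - 1) (by omega)).2.2.2
        rwa [show i.val - 1 + 1 = i.val by omega] at this
    · simp only
      rcases Nat.lt_or_ge i.val m₀ with h | h
      · have hmod : (i.val + 1) % (m₀ + 1) = i.val + 1 := Nat.mod_eq_of_lt (by omega)
        simp only [hmod, if_neg (by omega : ¬ i.val + 1 = 0),
          show i.val + 1 - 1 = i.val by omega]
        exact (hch i.val h).2.2.1
      · have hieq : i.val = m₀ := by omega
        simp only [hieq, Nat.mod_self, if_pos rfl]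
        exact hxm

end Big

section Comp
variable {P : Type*}

lemma conn_removed (B : PrePLS P) (ℓ₀ : Set P) {p q : P}
    (h : PLSConn B p q) :
    PLSConn ⟨B.E, B.lines \ {ℓ₀}⟩ p q ∨
      ((∃ u ∈ ℓ₀, PLSConn ⟨B.E, B.lines \ {ℓ₀}⟩ p u) ∧
       (∃ v ∈ ℓ₀, PLSConn ⟨B.E, B.lines \ {ℓ₀}⟩ q v)) := by
  set B' : PrePLS P := ⟨B.E, B.lines \ {ℓ₀}⟩ with hB'
  induction h with
  | refl => exact Or.inl .refl
  | @tail b c _ hstep ih =>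
    obtain ⟨ℓ, hℓ, hb, hc⟩ := hstep
    by_cases hℓ0 : ℓ = ℓ₀
    · subst hℓ0
      refine Or.inr ⟨?_, c, hc, .refl⟩
      rcases ih with h' | ⟨h', _⟩
      · exact ⟨b, hb, h'⟩
      · exact h'
    · have hstep' : PLSConn B' b c := .single ⟨ℓ, ⟨hℓ, hℓ0⟩, hb, hc⟩
      rcases ih with h' | ⟨hp', v, hv, hq'⟩
      · exact Or.inl (h'.trans hstep')
      · exact Or.inr ⟨hp', v, hv, (plsConn_symm B' hstep').trans hq'⟩

lemma numComponents_no_lines (B : PrePLS P) (h : B.lines = ∅) :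
    numComponents B = B.E.ncard := by
  have key : ∀ a b : P, PLSConn B a b → a = b := by
    intro a b hab
    induction hab with
    | refl => rfl
    | tail _ hstep ih => obtain ⟨ℓ, hℓ, _⟩ := hstep; rw [h] at hℓ; exact absurd hℓ (by simp)
  set r := fun p q : B.E => PLSConn B p.val q.val with hr
  have g : Quot r → B.E := Quot.lift id (fun a b hab => Subtype.ext (key _ _ hab))
  have hg : ∀ a : B.E, Quot.lift (id : B.E → B.E)
      (fun a b hab => Subtype.ext (key _ _ hab)) (Quot.mk r a) = a := fun _ => rfl
  have hbij : Function.Bijective (Quot.lift (id : B.E → B.E)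
      (fun a b hab => Subtype.ext (key _ _ hab))) := by
    constructor
    · intro u v huv
      induction u using Quot.ind with | _ a =>
      induction v using Quot.ind with | _ b =>
      rw [hg, hg] at huv
      exact congrArg (Quot.mk r) huv
    · intro a
      exact ⟨Quot.mk r a, rfl⟩
  rw [numComponents]
  exact (Nat.card_eq_of_bijective _ hbij).trans (Nat.card_coe_set_eq _)

lemma components_remove_line (B : PrePLS P)
    (h1 : ∀ ℓ ∈ B.lines, ℓ ⊆ B.E)
    (hsub : ∀ ℓ₁ ∈ B.lines, ∀ ℓ₂ ∈ B.lines, ℓ₁ ≠ ℓ₂ → (ℓ₁ ∩ ℓ₂).Subsingleton)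
    (hE : B.E.Finite) (hnc : ¬ HasCycle B) {ℓ₀ : Set P} (hℓ₀ : ℓ₀ ∈ B.lines)
    (hne : ℓ₀.Nonempty) :
    numComponents ⟨B.E, B.lines \ {ℓ₀}⟩ + 1 = numComponents B + ℓ₀.ncard := by
  classical
  set B' : PrePLS P := ⟨B.E, B.lines \ {ℓ₀}⟩ with hB'
  haveI : Finite B.E := hE.to_subtype
  set r := fun p q : B.E => PLSConn B p.val q.val with hr
  set r' := fun p q : B.E => PLSConn B' p.val q.val with hr'
  haveI : Finite (Quot r) := Finite.of_surjective _ (Quot.exists_rep (r := r) · )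
  haveI : Finite (Quot r') := Finite.of_surjective _ (Quot.exists_rep (r := r') · )
  have hmono : ∀ a b : B.E, r' a b → r a b := fun a b hab =>
    Relation.ReflTransGen.mono (r := fun p q => ∃ ℓ ∈ B'.lines, p ∈ ℓ ∧ q ∈ ℓ)
      (p := fun p q => ∃ ℓ ∈ B.lines, p ∈ ℓ ∧ q ∈ ℓ)
      (fun p q ⟨ℓ, hℓ, hp, hq⟩ => ⟨ℓ, hℓ.1, hp, hq⟩) _ _ hab
  set φ : Quot r' → Quot r := Quot.map id hmono with hφ
  have hφmk : ∀ a : B.E, φ (Quot.mk r' a) = Quot.mk r a := fun _ => rfl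
  have hφsurj : Function.Surjective φ := by
    intro b
    induction b using Quot.ind with | _ a =>
    exact ⟨Quot.mk r' a, rfl⟩
  obtain ⟨q₀, hq₀⟩ := hne
  have hq₀E : q₀ ∈ B.E := h1 ℓ₀ hℓ₀ hq₀
  set c₀ : Quot r := Quot.mk r ⟨q₀, hq₀E⟩ with hc₀
  have hdecode : ∀ u v : B.E, Quot.mk r u = Quot.mk r v → r u v := fun u v h =>
    (plsConn_equiv B).eqvGen_iff.mp (Quot.eq.mp h)
  have hdecode' : ∀ u v : B.E, Quot.mk r' u = Quot.mk r' v → r' u v := fun u v h =>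
    (plsConn_equiv B').eqvGen_iff.mp (Quot.eq.mp h)
  have hto_c0 : ∀ u : B.E, (∃ w ∈ ℓ₀, PLSConn B' u.val w) → Quot.mk r u = c₀ := by
    rintro u ⟨w, hw, hconn⟩
    refine Quot.sound ?_
    have h1' : PLSConn B u.val w := Relation.ReflTransGen.mono
      (r := fun p q => ∃ ℓ ∈ B'.lines, p ∈ ℓ ∧ q ∈ ℓ)
      (p := fun p q => ∃ ℓ ∈ B.lines, p ∈ ℓ ∧ q ∈ ℓ)
      (fun p q ⟨ℓ, hℓ, hp, hq⟩ => ⟨ℓ, hℓ.1, hp, hq⟩) _ _ hconn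
    exact h1'.trans (.single ⟨ℓ₀, hℓ₀, hw, hq₀⟩)
  -- fibers away from c₀ are singletons
  have hfib1 : ∀ b : Quot r, b ≠ c₀ → Nat.card {a : Quot r' // φ a = b} = 1 := by
    intro b hb
    rw [Nat.card_eq_one_iff_unique]
    constructor
    · constructor
      rintro ⟨a, ha⟩ ⟨a', ha'⟩
      apply Subtype.ext
      induction a using Quot.ind with | _ u =>
      induction a' using Quot.ind with | _ v =>
      rw [hφmk] at ha ha'
      have huv : r u v := hdecode u v (ha.trans ha'.symm)
      rcases conn_removed B ℓ₀ huv with h' | ⟨hu', _⟩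
      · exact Quot.sound h'
      · exact absurd (ha ▸ hto_c0 u hu') hb.elim
    · obtain ⟨a, ha⟩ := hφsurj b
      exact ⟨⟨a, ha⟩⟩
  -- the fiber over c₀ is in bijection with ℓ₀
  have hfib0 : Nat.card {a : Quot r' // φ a = c₀} = ℓ₀.ncard := by
    have hFc : ∀ w : ℓ₀, φ (Quot.mk r' ⟨w.val, h1 ℓ₀ hℓ₀ w.prop⟩) = c₀ := by
      intro w
      rw [hφmk]
      exact hto_c0 _ ⟨w.val, w.prop, .refl⟩
    let F : ℓ₀ → {a : Quot r' // φ a = c₀} :=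
      fun w => ⟨Quot.mk r' ⟨w.val, h1 ℓ₀ hℓ₀ w.prop⟩, hFc w⟩
    have hFbij : Function.Bijective F := by
      constructor
      · rintro ⟨w, hw⟩ ⟨w', hw'⟩ hF
        have hF' : Quot.mk r' ⟨w, h1 ℓ₀ hℓ₀ hw⟩ = Quot.mk r' ⟨w', h1 ℓ₀ hℓ₀ hw'⟩ := by
          exact congrArg Subtype.val hF
        have h' := hdecode' _ _ hF'
        apply Subtype.ext
        by_contra hne'
        exact no_conn_avoiding B hsub hnc hℓ₀ hw hw' hne' h'
      · rintro ⟨a, ha⟩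
        induction a using Quot.ind with | _ u =>
        rw [hφmk] at ha
        have huq : r u ⟨q₀, hq₀E⟩ := hdecode _ _ ha
        rcases conn_removed B ℓ₀ huq with h' | ⟨⟨w, hw, hconn⟩, _⟩
        · refine ⟨⟨q₀, hq₀⟩, Subtype.ext ?_⟩
          exact (Quot.sound (r := r') (a := u) (b := ⟨q₀, hq₀E⟩) h').symm
        · refine ⟨⟨w, hw⟩, Subtype.ext ?_⟩
          exact (Quot.sound (r := r') (a := u) (b := ⟨w, h1 ℓ₀ hℓ₀ hw⟩) hconn).symm
    rw [← Nat.card_eq_of_bijective F hFbij, Nat.card_coe_set_eq]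
  -- counting
  haveI : Fintype (Quot r) := Fintype.ofFinite _
  haveI : ∀ b : Quot r, Fintype {a : Quot r' // φ a = b} := fun _ => Fintype.ofFinite _
  haveI : Fintype (Quot r') := Fintype.ofFinite _
  have hQ' : numComponents B' = ∑ b : Quot r, Nat.card {a : Quot r' // φ a = b} := by
    have := Nat.card_congr (Equiv.sigmaFiberEquiv φ).symm
    rw [numComponents]
    rw [show Nat.card (Quot fun p q : B'.E => PLSConn B' p.val q.val) = Nat.card (Quot r') from rfl,
      this, Nat.card_eq_fintype_card, Fintype.card_sigma]
    congr 1
    ext b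
    rw [Nat.card_eq_fintype_card]
  have hsum : ∑ b : Quot r, Nat.card {a : Quot r' // φ a = b}
      = ∑ b ∈ Finset.univ.erase c₀, Nat.card {a : Quot r' // φ a = b}
        + Nat.card {a : Quot r' // φ a = c₀} :=
    (Finset.sum_erase_add _ _ (Finset.mem_univ c₀)).symm
  have herase : ∑ b ∈ Finset.univ.erase c₀, Nat.card {a : Quot r' // φ a = b}
      = (Finset.univ.erase c₀).card := by
    rw [Finset.card_eq_sum_ones]
    exact Finset.sum_congr rfl fun b hb => hfib1 b (Finset.ne_of_mem_erase hb)
  have hcard : (Finset.univ.erase c₀).card + 1 = numComponents B := by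
    rw [Finset.card_erase_add_one (Finset.mem_univ c₀), numComponents]
    rw [show Nat.card (Quot fun p q : B.E => PLSConn B p.val q.val) = Nat.card (Quot r) from rfl]
    rw [Nat.card_eq_fintype_card, Finset.card_univ]
  rw [hQ', hsum, herase, hfib0]
  omega

end Comp

section Main
variable {P : Type*}

lemma main_count (n : ℕ) (B : PrePLS P)
    (h1 : ∀ ℓ ∈ B.lines, ℓ ⊆ B.E)
    (h2 : ∀ ℓ ∈ B.lines, ℓ.Nonempty)
    (h3 : ∀ ℓ₁ ∈ B.lines, ∀ ℓ₂ ∈ B.lines, ℓ₁ ≠ ℓ₂ → (ℓ₁ ∩ ℓ₂).Subsingleton)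
    (hE : B.E.Finite) (hL : B.lines.Finite) (hnc : ¬ HasCycle B)
    (hn : B.lines.ncard = n) :
    numComponents B + ∑ ℓ ∈ hL.toFinset, ℓ.ncard = B.E.ncard + B.lines.ncard := by
  classical
  induction n using Nat.strong_induction_on generalizing B with
  | _ n IH =>
  rcases Set.eq_empty_or_nonempty B.lines with hLe | ⟨ℓ₀, hℓ₀⟩
  · have : hL.toFinset = ∅ := by simp [hLe]
    rw [this, numComponents_no_lines B hLe, hLe]
    simp
  · set B' : PrePLS P := ⟨B.E, B.lines \ {ℓ₀}⟩ with hB'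
    have hL' : B'.lines.Finite := hL.diff
    have hn1 : 1 ≤ n := by
      rw [← hn]
      exact (Set.ncard_pos hL).mpr ⟨ℓ₀, hℓ₀⟩
    have hn' : B'.lines.ncard = n - 1 := by
      rw [hB']
      simp only
      rw [Set.ncard_diff_singleton_of_mem hℓ₀, hn]
    have hnc' : ¬ HasCycle B' := by
      rintro ⟨n', hn3, ℓ, p, hmem, hinjl, hinjp, hcyc⟩
      exact hnc ⟨n', hn3, ℓ, p, fun i => (hmem i).1, hinjl, hinjp, hcyc⟩
    have hIH := IH (n - 1) (by omega) B'
      (fun ℓ hℓ => h1 ℓ hℓ.1) (fun ℓ hℓ => h2 ℓ hℓ.1)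
      (fun ℓ₁ hℓ₁ ℓ₂ hℓ₂ => h3 ℓ₁ hℓ₁.1 ℓ₂ hℓ₂.1) hE hL' hnc' hn'
    have hcomp := components_remove_line B h1 h3 hE hnc hℓ₀ (h2 ℓ₀ hℓ₀)
    have htf : hL'.toFinset = hL.toFinset.erase ℓ₀ := by
      ext ℓ
      simp [hB', Set.mem_diff, and_comm]
    have hsum : ∑ ℓ ∈ hL'.toFinset, ℓ.ncard + ℓ₀.ncard = ∑ ℓ ∈ hL.toFinset, ℓ.ncard := by
      rw [htf]
      exact Finset.sum_erase_add _ _ (hL.mem_toFinset.mpr hℓ₀)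
    rw [← hB'] at hcomp
    have hIH' : numComponents B' + ∑ ℓ ∈ hL'.toFinset, ℓ.ncard
        = B.E.ncard + B'.lines.ncard := hIH
    have hlin : B.lines.ncard = B'.lines.ncard + 1 := by
      rw [hn', hn]; omega
    omega
end Main

/-- Let `B = (E, Λ)` be a finite partial linear space with lines `ℓ₁, …, ℓ_t`.
Then every acyclifier `A` of `B` has the same cardinality, namely
`r*(B) = c(B) + (|ℓ₁| + ⋯ + |ℓ_t|) − |E| − t` (stated additively:
`|A| + |E| + t = c(B) + Σᵢ |ℓᵢ|`). -/
theorem acyclifier_card {P : Type*} (B : PrePLS P) (hB : IsPLS B)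
    (hE : B.E.Finite) (hL : B.lines.Finite)
    (A : Set (Set P × P)) (hA : IsAcyclifier B A) :
    A.ncard + B.E.ncard + B.lines.ncard =
      numComponents B + ∑ ℓ ∈ hL.toFinset, ℓ.ncard := by
  classical
  obtain ⟨h1, h2, h3⟩ := hB
  obtain ⟨hA1, hA2, hA3⟩ := hA
  set f : Set P → Set (P ⊕ (Set P × P)) :=
    fun ℓ => Sum.inl '' {p ∈ ℓ | (ℓ, p) ∉ A} ∪ Sum.inr '' {x ∈ A | x.1 = ℓ} with hf
  set B' := splitPLS B A with hB'
  have hlines' : B'.lines = f '' B.lines := by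
    ext ℓ'
    simp only [hB', splitPLS, Set.mem_setOf_eq, Set.mem_image, hf]
    constructor
    · rintro ⟨ℓ, hℓ, rfl⟩; exact ⟨ℓ, hℓ, rfl⟩
    · rintro ⟨ℓ, hℓ, rfl⟩; exact ⟨ℓ, hℓ, rfl⟩
  have hAfin : A.Finite := by
    apply Set.Finite.subset (hL.prod hE)
    rintro ⟨ℓ, p⟩ hx
    simp only [Set.mem_prod]
    exact ⟨(hA1 _ hx).1, h1 _ (hA1 _ hx).1 (hA1 _ hx).2⟩
  -- membership facts
  have hmeminr : ∀ ℓa (x : Set P × P), Sum.inr x ∈ f ℓa → x ∈ A ∧ x.1 = ℓa := by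
    intro ℓa x hx
    rcases hx with ⟨p, _, hp⟩ | ⟨y, hy, hy'⟩
    · exact absurd hp (by simp)
    · rw [Sum.inr.injEq] at hy'
      exact hy' ▸ hy
  have hmeminl : ∀ ℓa (p : P), Sum.inl p ∈ f ℓa → p ∈ ℓa := by
    intro ℓa p hp
    rcases hp with ⟨q, hq, hq'⟩ | ⟨y, _, hy'⟩
    · rw [Sum.inl.injEq] at hq'
      exact hq' ▸ hq.1
    · exact absurd hy' (by simp)
  have hinj : Set.InjOn f B.lines := by
    have key : ∀ ℓ, (¬ ∃ x ∈ A, x.1 = ℓ) → f ℓ = Sum.inl '' ℓ := by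
      intro ℓ hno
      have hs1 : {p ∈ ℓ | (ℓ, p) ∉ A} = ℓ := by
        rw [Set.sep_eq_self_iff_mem_true]
        exact fun p hp hpA => hno ⟨(ℓ, p), hpA, rfl⟩
      have hs2 : {x ∈ A | x.1 = ℓ} = (∅ : Set (Set P × P)) := by
        rw [Set.sep_eq_empty_iff_mem_false]
        exact fun x hx hx1 => hno ⟨x, hx, hx1⟩
      simp [hf, hs1, hs2]
    intro ℓ₁ hℓ₁ ℓ₂ hℓ₂ hfeq
    by_cases hx1 : ∃ x ∈ A, x.1 = ℓ₁
    · obtain ⟨x, hx, hx1'⟩ := hx1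
      have : Sum.inr x ∈ f ℓ₂ := by
        rw [← hfeq]
        exact Or.inr ⟨x, ⟨hx, hx1'⟩, rfl⟩
      rw [← hx1', (hmeminr _ _ this).2]
    · by_cases hx2 : ∃ x ∈ A, x.1 = ℓ₂
      · obtain ⟨x, hx, hx2'⟩ := hx2
        have : Sum.inr x ∈ f ℓ₁ := by
          rw [hfeq]
          exact Or.inr ⟨x, ⟨hx, hx2'⟩, rfl⟩
        rw [← hx2', (hmeminr _ _ this).2]
      · have e1 := key ℓ₁ hx1
        have e2 := key ℓ₂ hx2
        rw [e1, e2] at hfeq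
        exact Set.image_injective.mpr Sum.inl_injective hfeq
  have hcard : ∀ ℓ ∈ B.lines, (f ℓ).ncard = ℓ.ncard := by
    intro ℓ hℓ
    have hℓfin : ℓ.Finite := hE.subset (h1 ℓ hℓ)
    have hfin1 : ({p ∈ ℓ | (ℓ, p) ∉ A}).Finite := hℓfin.subset (Set.sep_subset _ _)
    have hfin2 : ({x ∈ A | x.1 = ℓ}).Finite := hAfin.subset (Set.sep_subset _ _)
    have hd : Disjoint (Sum.inl '' {p ∈ ℓ | (ℓ, p) ∉ A}) (Sum.inr '' {x ∈ A | x.1 = ℓ}) := by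
      rw [Set.disjoint_left]
      rintro z ⟨p, _, rfl⟩ ⟨x, _, hx⟩
      exact absurd hx (by simp)
    have step1 : (f ℓ).ncard = {p ∈ ℓ | (ℓ, p) ∉ A}.ncard + {x ∈ A | x.1 = ℓ}.ncard := by
      rw [hf]
      rw [Set.ncard_union_eq hd (hfin1.image _) (hfin2.image _),
        Set.ncard_image_of_injective _ Sum.inl_injective,
        Set.ncard_image_of_injective _ Sum.inr_injective]
    have himg : Prod.snd '' {x ∈ A | x.1 = ℓ} = {p ∈ ℓ | (ℓ, p) ∈ A} := by
      ext p
      simp only [Set.mem_image, Set.mem_setOf_eq]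
      constructor
      · rintro ⟨⟨ℓ', p'⟩, ⟨hxA, hx1⟩, rfl⟩
        simp only at hx1
        subst hx1
        exact ⟨(hA1 _ hxA).2, hxA⟩
      · rintro ⟨hpℓ, hpA⟩
        exact ⟨(ℓ, p), ⟨hpA, rfl⟩, rfl⟩
    have hsnd : {x ∈ A | x.1 = ℓ}.ncard = {p ∈ ℓ | (ℓ, p) ∈ A}.ncard := by
      rw [← himg]
      refine (Set.ncard_image_of_injOn ?_).symm
      rintro ⟨a, b⟩ ha ⟨c, d⟩ hc h
      simp only [Set.mem_setOf_eq] at ha hc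
      simp only at h
      rw [Prod.mk.injEq]
      exact ⟨ha.2.trans hc.2.symm, h⟩
    have hd2 : Disjoint {p ∈ ℓ | (ℓ, p) ∉ A} {p ∈ ℓ | (ℓ, p) ∈ A} := by
      rw [Set.disjoint_left]
      rintro p ⟨_, hp1⟩ ⟨_, hp2⟩
      exact hp1 hp2
    have hu : {p ∈ ℓ | (ℓ, p) ∉ A} ∪ {p ∈ ℓ | (ℓ, p) ∈ A} = ℓ := by
      ext p
      simp only [Set.mem_union, Set.mem_setOf_eq]
      constructor
      · rintro (⟨h, _⟩ | ⟨h, _⟩) <;> exact h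
      · intro hp
        by_cases hpA : (ℓ, p) ∈ A
        · exact Or.inr ⟨hp, hpA⟩
        · exact Or.inl ⟨hp, hpA⟩
    rw [step1, hsnd, ← Set.ncard_union_eq hd2 hfin1 (hℓfin.subset (Set.sep_subset _ _)), hu]
  have hdisjE : Disjoint (Sum.inl '' B.E) (Sum.inr '' A : Set (P ⊕ (Set P × P))) := by
    rw [Set.disjoint_left]
    rintro z ⟨p, _, rfl⟩ ⟨x, _, hx⟩
    exact absurd hx (by simp)
  have hE' : B'.E.ncard = B.E.ncard + A.ncard := by
    show ((Sum.inl '' B.E) ∪ (Sum.inr '' A)).ncard = _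
    rw [Set.ncard_union_eq hdisjE (hE.image _) (hAfin.image _),
      Set.ncard_image_of_injective _ Sum.inl_injective,
      Set.ncard_image_of_injective _ Sum.inr_injective]
  have hEfin' : B'.E.Finite := (hE.image _).union (hAfin.image _)
  have hLfin' : B'.lines.Finite := by rw [hlines']; exact hL.image f
  have ht' : B'.lines.ncard = B.lines.ncard := by
    rw [hlines', Set.ncard_image_of_injOn hinj]
  have h1' : ∀ ℓ' ∈ B'.lines, ℓ' ⊆ B'.E := by
    rw [hlines']
    rintro ℓ' ⟨ℓ, hℓ, rfl⟩ z hz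
    rcases hz with ⟨p, hp, rfl⟩ | ⟨x, hx, rfl⟩
    · exact Or.inl ⟨p, h1 ℓ hℓ hp.1, rfl⟩
    · exact Or.inr ⟨x, hx.1, rfl⟩
  have h2' : ∀ ℓ' ∈ B'.lines, ℓ'.Nonempty := by
    rw [hlines']
    rintro ℓ' ⟨ℓ, hℓ, rfl⟩
    obtain ⟨p, hp, _⟩ := h2 ℓ hℓ
    by_cases hpA : (ℓ, p) ∈ A
    · exact ⟨Sum.inr (ℓ, p), Or.inr ⟨(ℓ, p), ⟨hpA, rfl⟩, rfl⟩⟩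
    · exact ⟨Sum.inl p, Or.inl ⟨p, ⟨hp, hpA⟩, rfl⟩⟩
  have h3' : ∀ ℓ₁' ∈ B'.lines, ∀ ℓ₂' ∈ B'.lines, ℓ₁' ≠ ℓ₂' → (ℓ₁' ∩ ℓ₂').Subsingleton := by
    rw [hlines']
    rintro _ ⟨ℓ₁, hℓ₁, rfl⟩ _ ⟨ℓ₂, hℓ₂, rfl⟩ hne
    have hℓne : ℓ₁ ≠ ℓ₂ := fun h => hne (h ▸ rfl)
    have hboth : ∀ z ∈ f ℓ₁ ∩ f ℓ₂, ∃ p, z = Sum.inl p ∧ p ∈ ℓ₁ ∩ ℓ₂ := by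
      rintro z ⟨hz1, hz2⟩
      rcases z with p | x
      · exact ⟨p, rfl, hmeminl _ _ hz1, hmeminl _ _ hz2⟩
      · have e1 := (hmeminr _ _ hz1).2
        have e2 := (hmeminr _ _ hz2).2
        exact absurd (e1.symm.trans e2) hℓne
    intro z hz z' hz'
    obtain ⟨p, rfl, hp⟩ := hboth z hz
    obtain ⟨p', rfl, hp'⟩ := hboth z' hz'
    rw [h3 ℓ₁ hℓ₁ ℓ₂ hℓ₂ hℓne hp hp']
  have hmc := main_count (B'.lines.ncard) B' h1' h2' h3' hEfin' hLfin' hA2 rfl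
  have htfin : hLfin'.toFinset = hL.toFinset.image f := by
    ext ℓ'
    simp [hlines']
  have hsum' : ∑ ℓ' ∈ hLfin'.toFinset, ℓ'.ncard = ∑ ℓ ∈ hL.toFinset, ℓ.ncard := by
    rw [htfin, Finset.sum_image
      (fun ℓa ha ℓb hb h => hinj (hL.mem_toFinset.mp ha) (hL.mem_toFinset.mp hb) h)]
    exact Finset.sum_congr rfl fun ℓ hℓ => hcard ℓ (hL.mem_toFinset.mp hℓ)
  rw [hA3, hsum', hE', ht'] at hmc
  omega
end
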